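/- arXiv:1910.11574 — 6 statements merged into one kernel-verified Lean document; each statement's English description precedes it below -/
import Mathlib

section
/- Let δ be a derivation of a field F with constant subfield K, and let c_1, …, c_n ∈ F. Then {c_1, …, c_n} is linearly independent over K if and only if the Wronskian matrix W_n(c_1,…,c_n), whose (i,j) entry is δ^{i-1}(c_j) for 1 ≤ i,j ≤ n, is invertible. -/
/-!
If the `b_j` are constants, `δ^k (∑ b_j c_j) = ∑ b_j δ^k c_j`, so a constant relation among the
`c_j` is a kernel vector of the Wronskian matrix; this gives one direction. Conversely, if
`W_{n+1}(c)` is singular but `W_n(c_1, …, c_n)` is not, a kernel vector `b` can be normalised to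
`b_{n+1} = 1`. Differentiating `W_{n+1} b = 0` with the Leibniz rule shows that `δ b` solves the
first `n` rows, hence `W_n(c_1, …, c_n) (δ b_1, …, δ b_n) = 0`, so `δ b = 0` and `b` is a constant
relation. Induction on `n` handles the case where `W_n` is singular too.
-/

open Matrix

namespace Derivation

variable {R : Type*} [CommRing R]

def wronskianMatrix {A ι : Type*} [CommRing A] [Algebra R A] (D : Derivation R A A) (m : ℕ)
    (c : ι → A) : Matrix (Fin m) ι A :=
  Matrix.of fun i j => D^[i] (c j)

section CommRing

variable {A : Type*} [CommRing A] [Algebra R A] (D : Derivation R A A)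

theorem iterate_sum_mul_of_map_eq_zero {ι : Type*} [Fintype ι] {b : ι → A}
    (hb : ∀ j, D (b j) = 0) (c : ι → A) (k : ℕ) :
    D^[k] (∑ j, b j * c j) = ∑ j, b j * D^[k] (c j) := by
  induction k with
  | zero => rfl
  | succ k ih =>
    simp only [Function.iterate_succ_apply', ih, map_sum, leibniz, hb, smul_eq_mul, mul_zero,
      add_zero]

theorem wronskianMatrix_mulVec_eq_zero_of_map_eq_zero {ι : Type*} [Fintype ι] {b : ι → A}
    (hb : ∀ j, D (b j) = 0) {c : ι → A} (hbc : ∑ j, b j * c j = 0) (m : ℕ) :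
    D.wronskianMatrix m c *ᵥ b = 0 := by
  ext i
  have hrow := D.iterate_sum_mul_of_map_eq_zero hb c i
  rw [hbc, Function.iterate_fixed D.map_zero] at hrow
  simp only [mulVec, dotProduct, wronskianMatrix, of_apply, Pi.zero_apply]
  simpa only [mul_comm] using hrow.symm

/-- Differentiating row `i` of `W_{m+1} b = 0` gives row `i` of `W_m (δ b)` plus row `i + 1` of
`W_{m+1} b`. -/
theorem wronskianMatrix_mulVec_comp_eq_zero_of_succ {ι : Type*} [Fintype ι] {m : ℕ}
    {c b : ι → A} (h : D.wronskianMatrix (m + 1) c *ᵥ b = 0) :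
    D.wronskianMatrix m c *ᵥ (D ∘ b) = 0 := by
  ext i
  have hrow := congrArg D (congrFun h i.castSucc)
  have hnext := congrFun h i.succ
  simp only [mulVec, dotProduct, wronskianMatrix, of_apply, Pi.zero_apply, Fin.val_castSucc,
    Fin.val_succ, map_sum, leibniz, smul_eq_mul, map_zero, Finset.sum_add_distrib,
    Function.iterate_succ_apply', Function.comp_apply] at hrow hnext ⊢
  simp_rw [mul_comm (b _)] at hrow
  rwa [hnext, add_zero] at hrow

theorem eq_zero_of_isUnit_det_wronskianMatrix {n : ℕ} {c b : Fin n → A}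
    (hc : IsUnit (D.wronskianMatrix n c).det) (hb : ∀ j, D (b j) = 0)
    (hbc : ∑ j, b j * c j = 0) : b = 0 :=
  mulVec_injective_of_det_mem_nonZeroDivisors hc.mem_nonZeroDivisors <| by
    rw [D.wronskianMatrix_mulVec_eq_zero_of_map_eq_zero hb hbc, mulVec_zero]

theorem wronskianMatrix_castSucc_mulVec {m n : ℕ} {c v : Fin (n + 1) → A}
    (hv : v (Fin.last n) = 0) :
    D.wronskianMatrix m (c ∘ Fin.castSucc) *ᵥ (v ∘ Fin.castSucc) = D.wronskianMatrix m c *ᵥ v := by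
  ext i
  simp [mulVec, dotProduct, wronskianMatrix, Fin.sum_univ_castSucc, hv]

end CommRing

section Field

variable {F : Type*} [Field F] [Algebra R F] (D : Derivation R F F)

theorem exists_constant_relation_of_det_wronskianMatrix_castSucc_ne_zero {n : ℕ}
    {c : Fin (n + 1) → F} (hc : (D.wronskianMatrix (n + 1) c).det = 0)
    (hc' : (D.wronskianMatrix n (c ∘ Fin.castSucc)).det ≠ 0) :
    ∃ b : Fin (n + 1) → F, b (Fin.last n) = 1 ∧ (∀ j, D (b j) = 0) ∧ ∑ j, b j * c j = 0 := by
  obtain ⟨v, hv0, hv⟩ := exists_mulVec_eq_zero_iff.mpr hc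
  have hv_last : v (Fin.last n) ≠ 0 := by
    intro hv_last
    refine hc' (exists_mulVec_eq_zero_iff.mp ⟨v ∘ Fin.castSucc, fun hv0' => hv0 ?_, ?_⟩)
    · ext j
      induction j using Fin.lastCases with
      | last => exact hv_last
      | cast j => exact congrFun hv0' j
    · rw [D.wronskianMatrix_castSucc_mulVec hv_last]
      exact funext fun i => congrFun hv i.castSucc
  set b := (v (Fin.last n))⁻¹ • v
  have hb_last : b (Fin.last n) = 1 := inv_mul_cancel₀ hv_last
  have hb : D.wronskianMatrix (n + 1) c *ᵥ b = 0 := by rw [mulVec_smul, hv, smul_zero]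
  have hDb_last : D (b (Fin.last n)) = 0 := by rw [hb_last, D.map_one_eq_zero]
  have hDb : (D ∘ b) ∘ Fin.castSucc = 0 :=
    eq_zero_of_mulVec_eq_zero hc' <| by
      rw [D.wronskianMatrix_castSucc_mulVec hDb_last]
      exact D.wronskianMatrix_mulVec_comp_eq_zero_of_succ hb
  refine ⟨b, hb_last, fun j => ?_, ?_⟩
  · induction j using Fin.lastCases with
    | last => exact hDb_last
    | cast j => exact congrFun hDb j
  · simpa only [mulVec, dotProduct, wronskianMatrix, of_apply, Fin.val_zero, Function.iterate_zero,
      id, mul_comm, Pi.zero_apply] using congrFun hb 0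

theorem exists_constant_relation_of_det_wronskianMatrix_eq_zero :
    ∀ {n : ℕ} {c : Fin n → F}, (D.wronskianMatrix n c).det = 0 →
      ∃ b : Fin n → F, b ≠ 0 ∧ (∀ j, D (b j) = 0) ∧ ∑ j, b j * c j = 0
  | 0, c, hc => by simp [wronskianMatrix] at hc
  | n + 1, c, hc => by
    by_cases hc' : (D.wronskianMatrix n (c ∘ Fin.castSucc)).det = 0
    · obtain ⟨b, hb0, hbD, hbc⟩ := exists_constant_relation_of_det_wronskianMatrix_eq_zero hc'
      refine ⟨Fin.snoc b 0, fun h => hb0 (funext fun j => by simpa using congrFun h j.castSucc),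
        fun j => ?_, by simpa [Fin.sum_univ_castSucc] using hbc⟩
      induction j using Fin.lastCases with
      | last => simp
      | cast j => simpa using hbD j
    · obtain ⟨b, hb_last, hbD, hbc⟩ :=
        D.exists_constant_relation_of_det_wronskianMatrix_castSucc_ne_zero hc hc'
      exact ⟨b, fun h => by simp [h] at hb_last, hbD, hbc⟩

end Field

def ofAddLeibniz {A : Type*} [CommRing A] (δ : A → A) (hadd : ∀ a b : A, δ (a + b) = δ a + δ b)
    (hmul : ∀ a b : A, δ (a * b) = a * δ b + δ a * b) : Derivation ℤ A A :=
  Derivation.mk' (AddMonoidHom.mk' δ hadd).toIntLinearMap fun a b => by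
    simp [hmul, mul_comm]

end Derivation

/-- Wronskian criterion: elements `c_1, …, c_n` of a field `F` with derivation `δ`
are linearly independent over the constant subfield `K = {a : δ a = 0}` if and only if
the Wronskian matrix `(δ^{i-1}(c_j))` is invertible. -/
theorem wronskian_criterion (F : Type*) [Field F]
    (δ : F → F)
    (hadd : ∀ a b : F, δ (a + b) = δ a + δ b)
    (hmul : ∀ a b : F, δ (a * b) = a * δ b + δ a * b)
    (n : ℕ) (c : Fin n → F) :
    (∀ a : Fin n → F, (∀ i, δ (a i) = 0) → ∑ i, a i * c i = 0 → ∀ i, a i = 0)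
      ↔ IsUnit (Matrix.of fun i j : Fin n => δ^[(i : ℕ)] (c j)).det := by
  set D := Derivation.ofAddLeibniz δ hadd hmul
  change (∀ a : Fin n → F, (∀ i, D (a i) = 0) → ∑ i, a i * c i = 0 → ∀ i, a i = 0)
    ↔ IsUnit (D.wronskianMatrix n c).det
  refine ⟨fun hc => isUnit_iff_ne_zero.mpr fun hdet => ?_, fun hc b hbD hbc => ?_⟩
  · obtain ⟨b, hb0, hbD, hbc⟩ := D.exists_constant_relation_of_det_wronskianMatrix_eq_zero hdet
    exact hb0 (funext (hc b hbD hbc))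
  · exact congrFun (D.eq_zero_of_isUnit_det_wronskianMatrix hc hbD hbc)
end

section
/- Let δ be a derivation of F_q(z) satisfying δ^p = γδ with γ ∈ K (the constant field). Then for every nonzero c ∈ F_q(z), the element L(c) = δ(c)/c is a right root of x^p − γx in the Ore extension F_q(z)[x; δ], i.e., x − L(c) right-divides x^p − γx. -/
/-! `N_k(δ c / c) = δ^k(c) / c` for every `k`, by induction using the quotient rule, so the
right evaluation of `x^p − γx` at `δ c / c` is `(δ^p c − γ δ c) / c = 0`. -/

/-- `N_k(a)`: `N_0(a) = 1`, `N_{k+1}(a) = N_k(a)·a + δ(N_k(a))`. -/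
def Nrec {F : Type*} [Field F] (δ : F → F) (a : F) : ℕ → F
  | 0 => 1
  | k + 1 => Nrec δ a k * a + δ (Nrec δ a k)

section Leibniz

variable {F : Type*} [Field F] {δ : F → F}

theorem map_div_of_leibniz (hmul : ∀ a b : F, δ (a * b) = a * δ b + δ a * b) {c : F} (hc : c ≠ 0)
    (f : F) : δ (f / c) = (δ f - f / c * δ c) / c := by
  have hf : δ f = f / c * δ c + δ (f / c) * c := by
    conv_lhs => rw [← div_mul_cancel₀ f hc]
    exact hmul _ _
  rw [hf]
  field_simp
  ring

theorem Nrec_logDeriv (hmul : ∀ a b : F, δ (a * b) = a * δ b + δ a * b) {c : F} (hc : c ≠ 0)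
    (k : ℕ) : Nrec δ (δ c / c) k = δ^[k] c / c := by
  induction k with
  | zero => simp [Nrec, div_self hc]
  | succ k ih =>
    rw [Nrec, ih, map_div_of_leibniz hmul hc, Function.iterate_succ_apply']
    field_simp
    ring

end Leibniz

theorem logderiv_is_right_root_general (Fq : Type*) [Field Fq] (p : ℕ)
    (δ : RatFunc Fq → RatFunc Fq)
    (hmul : ∀ a b : RatFunc Fq, δ (a * b) = a * δ b + δ a * b)
    (γ : RatFunc Fq)
    (hp : ∀ f : RatFunc Fq, δ^[p] f = γ * δ f)
    (c : RatFunc Fq) (hc : c ≠ 0) :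
    Nrec δ (δ c / c) p - γ * Nrec δ (δ c / c) 1 = 0 := by
  rw [Nrec_logDeriv hmul hc, Nrec_logDeriv hmul hc, hp, Function.iterate_one]
  ring

/-- If `δ` is a derivation of `F_q(z)` with `δ^p = γ·δ` and `γ` a constant, then for
every nonzero `c`, the logarithmic derivative `L(c) = δ(c)/c` is a right root of
`x^p − γx` in `F_q(z)[x;δ]`, i.e. the right evaluation
`(x^p − γx)[L(c)] = N_p(L(c)) − γ·N_1(L(c))` vanishes (equivalently, `x − L(c)`
right-divides `x^p − γx`). -/
theorem logderiv_is_right_root (Fq : Type*) [Field Fq] [Fintype Fq] (p : ℕ) [Fact p.Prime]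
    [CharP Fq p]
    (δ : RatFunc Fq → RatFunc Fq)
    (hadd : ∀ a b : RatFunc Fq, δ (a + b) = δ a + δ b)
    (hmul : ∀ a b : RatFunc Fq, δ (a * b) = a * δ b + δ a * b)
    (γ : RatFunc Fq) (hγ : δ γ = 0)
    (hp : ∀ f : RatFunc Fq, δ^[p] f = γ * δ f)
    (c : RatFunc Fq) (hc : c ≠ 0) :
    Nrec δ (δ c / c) p - γ * Nrec δ (δ c / c) 1 = 0 :=
  logderiv_is_right_root_general Fq p δ hmul γ hp c hc
end

section
/- Let δ be a nonzero derivation of F_q(z) with δ^p = γδ, and let c_1, …, c_m ∈ F_q(z) (m ≤ p−1) be nonzero and linearly independent over the constant field K. Let g = [x − L(c_1), …, x − L(c_m)]_ℓ be the least left common multiple in F_q(z)[x;δ]. Then deg(g) = m and g is a right divisor of x^p − γx. -/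
open scoped BigOperators

/-- Coefficients of the product `f·g` in the differential operator ring `F[x;δ]`. -/
noncomputable def skewMul {F : Type*} [Field F] (δ : F → F) (f g : ℕ →₀ F) (n : ℕ) : F :=
  ∑ i ∈ f.support, ∑ j ∈ g.support,
    if j ≤ n then f i * (Nat.choose i (n - j) : F) * δ^[i - (n - j)] (g j) else 0

/-- `f` is a right divisor of `g` in `F[x;δ]`: `g = q·f` for some `q`. -/
noncomputable def RDvd {F : Type*} [Field F] (δ : F → F) (f g : ℕ →₀ F) : Prop :=
  ∃ q : ℕ →₀ F, ∀ n : ℕ, g n = skewMul δ q f n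

/-- `g` is monic of degree `m`. -/
def IsMonicOfDeg {F : Type*} [Field F] (g : ℕ →₀ F) (m : ℕ) : Prop :=
  g m = 1 ∧ ∀ n : ℕ, m < n → g n = 0

open Finset

set_option linter.unusedSectionVars false

section Aux
variable {F : Type*} [Field F] (δ : F → F)
variable (hadd : ∀ a b : F, δ (a + b) = δ a + δ b)
variable (hmul : ∀ a b : F, δ (a * b) = a * δ b + δ a * b)
theorem supp_subset_range (f : ℕ →₀ F) (N : ℕ) (hf : ∀ n, N < n → f n = 0) :
    f.support ⊆ range (N + 1) := by
  intro n hn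
  rw [Finsupp.mem_support_iff] at hn
  rw [mem_range]
  by_contra h
  exact hn (hf n (by omega))

include hadd hmul

theorem SKd_zero : δ 0 = 0 := by
  have := hadd 0 0; simpa using this.symm

theorem SKd_one : δ 1 = 0 := by
  have := hmul 1 1; simpa using this

theorem SKd_neg (a : F) : δ (-a) = - δ a := by
  have := hadd a (-a); rw [add_neg_cancel, SKd_zero δ hadd hmul] at this
  linear_combination -this

theorem SKd_sum {ι : Type*} (s : Finset ι) (f : ι → F) :
    δ (∑ i ∈ s, f i) = ∑ i ∈ s, δ (f i) :=
  map_sum (AddMonoidHom.mk' δ hadd) f s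

theorem SKd_nat (n : ℕ) (a : F) : δ ((n : F) * a) = (n : F) * δ a := by
  induction n with
  | zero => simp [SKd_zero δ hadd hmul]
  | succ n ih => push_cast; rw [add_mul, one_mul, hadd, ih, add_mul, one_mul]

theorem SKit_zero (k : ℕ) : δ^[k] 0 = 0 := by
  induction k with
  | zero => rfl
  | succ k ih => rw [Function.iterate_succ_apply', ih, SKd_zero δ hadd hmul]

theorem SKit_add (k : ℕ) (a b : F) : δ^[k] (a + b) = δ^[k] a + δ^[k] b := by
  induction k with
  | zero => rfl
  | succ k ih => rw [Function.iterate_succ_apply', ih, hadd,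
      Function.iterate_succ_apply', Function.iterate_succ_apply']

theorem SKit_sum (k : ℕ) {ι : Type*} (s : Finset ι) (f : ι → F) :
    δ^[k] (∑ i ∈ s, f i) = ∑ i ∈ s, δ^[k] (f i) :=
  map_sum (AddMonoidHom.mk' (δ^[k]) (SKit_add δ hadd hmul k)) f s

theorem SKit_one (k : ℕ) : δ^[k] 1 = if k = 0 then 1 else 0 := by
  cases k with
  | zero => rfl
  | succ k => simp only [Function.iterate_succ_apply, SKd_one δ hadd hmul,
      SKit_zero δ hadd hmul, Nat.succ_ne_zero, if_false]

theorem SKleibniz (n : ℕ) (a b : F) :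
    δ^[n] (a * b) = ∑ k ∈ range (n + 1),
      (n.choose k : F) * (δ^[n - k] a * δ^[k] b) := by
  induction n with
  | zero => simp
  | succ n IH =>
    rw [Function.iterate_succ_apply', IH, SKd_sum δ hadd hmul]
    have step : ∀ k, δ ((n.choose k : F) * (δ^[n - k] a * δ^[k] b))
        = (n.choose k : F) * (δ^[n - k + 1] a * δ^[k] b)
          + (n.choose k : F) * (δ^[n - k] a * δ^[k + 1] b) := by
      intro k
      rw [SKd_nat δ hadd hmul, hmul, Function.iterate_succ_apply' δ (n-k),
        Function.iterate_succ_apply' δ k]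
      ring
    simp_rw [step, sum_add_distrib]
    have hS1 : ∑ k ∈ range (n+1), (n.choose k : F) * (δ^[n - k + 1] a * δ^[k] b)
        = (∑ k ∈ range n, (n.choose (k+1) : F) * (δ^[n - k] a * δ^[k+1] b))
          + δ^[n+1] a * δ^[0] b := by
      rw [sum_range_succ' (fun k => (n.choose k : F) * (δ^[n - k + 1] a * δ^[k] b))]
      congr 1
      · apply sum_congr rfl; intro k hk; rw [mem_range] at hk
        congr 3; omega
      · simp
    have hRHS : ∑ k ∈ range (n+2), ((n+1).choose k : F) * (δ^[n + 1 - k] a * δ^[k] b)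
        = (∑ k ∈ range (n+1), ((n+1).choose (k+1) : F) * (δ^[n - k] a * δ^[k+1] b))
          + δ^[n+1] a * δ^[0] b := by
      rw [sum_range_succ' (fun k => ((n+1).choose k : F) * (δ^[n + 1 - k] a * δ^[k] b))]
      congr 1
      · apply sum_congr rfl; intro k hk; rw [mem_range] at hk
        congr 3; omega
      · simp
    have hT : ∑ k ∈ range (n+1), (n.choose (k+1) : F) * (δ^[n - k] a * δ^[k+1] b)
        = ∑ k ∈ range n, (n.choose (k+1) : F) * (δ^[n - k] a * δ^[k+1] b) := by
      rw [sum_range_succ]; simp [Nat.choose_succ_self]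
    show _ = ∑ k ∈ range (n+2), ((n+1).choose k : F) * (δ^[n + 1 - k] a * δ^[k] b)
    rw [hRHS, hS1]
    have : ∀ k, (((n+1).choose (k+1) : ℕ) : F) = (n.choose k : F) + (n.choose (k+1) : F) := by
      intro k; rw [Nat.choose_succ_succ]; push_cast; ring
    simp_rw [this, add_mul, sum_add_distrib, hT]
    ring

/-- evaluation of an operator at `c` -/
noncomputable def SKev (f : ℕ →₀ F) (c : F) : F := ∑ i ∈ f.support, f i * δ^[i] c

theorem SKev_eq_sum (f : ℕ →₀ F) (c : F) {s : Finset ℕ} (hs : f.support ⊆ s) :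
    SKev δ f c = ∑ i ∈ s, f i * δ^[i] c := by
  apply sum_subset hs
  intro i _ hi
  rw [Finsupp.notMem_support_iff.mp hi, zero_mul]

theorem SKev_zero (f : ℕ →₀ F) : SKev δ f 0 = 0 := by
  unfold SKev
  apply sum_eq_zero
  intro i _
  rw [SKit_zero δ hadd hmul, mul_zero]

theorem skewMul_eq_sum (f g : ℕ →₀ F) (n : ℕ) {s t : Finset ℕ}
    (hs : f.support ⊆ s) (ht : g.support ⊆ t) :
    skewMul δ f g n = ∑ i ∈ s, ∑ j ∈ t,
      (if j ≤ n then f i * (Nat.choose i (n - j) : F) * δ^[i - (n - j)] (g j) else 0) := by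
  rw [skewMul]
  rw [sum_subset hs (fun i _ hi => by
    simp [Finsupp.notMem_support_iff.mp hi])]
  apply sum_congr rfl; intro i _
  apply sum_subset ht
  intro j _ hj
  simp [Finsupp.notMem_support_iff.mp hj, SKit_zero δ hadd hmul]


theorem skewMul_bound (f g : ℕ →₀ F) (A B : ℕ)
    (hf : ∀ n, A < n → f n = 0) (hg : ∀ n, B < n → g n = 0) :
    ∀ n, A + B < n → skewMul δ f g n = 0 := by
  intro n hn
  rw [skewMul_eq_sum δ hadd hmul f g n (supp_subset_range f A hf) (supp_subset_range g B hg)]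
  apply sum_eq_zero; intro i hi
  apply sum_eq_zero; intro j hj
  rw [mem_range] at hi hj
  rcases le_or_gt j n with h | h
  · rw [if_pos h, Nat.choose_eq_zero_of_lt (by omega)]
    simp
  · rw [if_neg (by omega)]

theorem skewMul_lead (f g : ℕ →₀ F) (A B : ℕ)
    (hf : ∀ n, A < n → f n = 0) (hg : ∀ n, B < n → g n = 0) :
    skewMul δ f g (A + B) = f A * g B := by
  rw [skewMul_eq_sum δ hadd hmul f g (A+B) (supp_subset_range f A hf) (supp_subset_range g B hg)]
  rw [Finset.sum_eq_single A]
  · rw [Finset.sum_eq_single B]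
    · rw [if_pos (by omega : B ≤ A + B)]
      have h1 : A + B - B = A := by omega
      rw [h1, Nat.choose_self, Nat.sub_self]
      simp
    · intro j hj hjB
      rw [mem_range] at hj
      rw [if_pos (by omega : j ≤ A + B), Nat.choose_eq_zero_of_lt (by omega)]
      simp
    · intro h
      exact absurd (mem_range.mpr (by omega)) h
  · intro i hi hiA
    rw [mem_range] at hi
    apply sum_eq_zero; intro j hj
    rw [mem_range] at hj
    rcases le_or_gt j (A+B) with h | h
    · rw [if_pos h, Nat.choose_eq_zero_of_lt (by omega)]
      simp
    · rw [if_neg (by omega)]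
  · intro h
    exact absurd (mem_range.mpr (by omega)) h

theorem skewMul_zero_left (g : ℕ →₀ F) (n : ℕ) : skewMul δ 0 g n = 0 := by
  simp [skewMul]

theorem skewMul_add_left (q₁ q₂ g : ℕ →₀ F) (n : ℕ) :
    skewMul δ (q₁ + q₂) g n = skewMul δ q₁ g n + skewMul δ q₂ g n := by
  rw [skewMul_eq_sum δ hadd hmul (q₁ + q₂) g n
      (Finsupp.support_add : (q₁ + q₂).support ⊆ q₁.support ∪ q₂.support) (subset_refl _),
    skewMul_eq_sum δ hadd hmul q₁ g n
      (Finset.subset_union_left : q₁.support ⊆ q₁.support ∪ q₂.support) (subset_refl _),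
    skewMul_eq_sum δ hadd hmul q₂ g n
      (Finset.subset_union_right : q₂.support ⊆ q₁.support ∪ q₂.support) (subset_refl _),
    ← sum_add_distrib]
  apply sum_congr rfl; intro i _
  rw [← sum_add_distrib]
  apply sum_congr rfl; intro j _
  rcases le_or_gt j n with h | h
  · simp only [if_pos h, Finsupp.add_apply]
    ring
  · simp only [if_neg (not_le.mpr h), add_zero]

theorem SKit_neg (k : ℕ) (a : F) : δ^[k] (-a) = - δ^[k] a := by
  induction k with
  | zero => rfl
  | succ k ih => rw [Function.iterate_succ_apply', ih, SKd_neg δ hadd hmul,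
      Function.iterate_succ_apply']

/-- composition/evaluation lemma -/
theorem ev_skewMul (q f : ℕ →₀ F) (c : F) (N : ℕ)
    (hN : ∀ i ∈ q.support, ∀ j ∈ f.support, i + j < N) :
    ∑ n ∈ range N, skewMul δ q f n * δ^[n] c = SKev δ q (SKev δ f c) := by
  unfold skewMul SKev
  simp_rw [sum_mul]
  rw [Finset.sum_comm]
  have swap2 : ∀ i ∈ q.support,
      ∑ n ∈ range N, ∑ j ∈ f.support,
        (if j ≤ n then q i * (Nat.choose i (n - j) : F) * δ^[i - (n - j)] (f j) else 0) * δ^[n] c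
      = ∑ j ∈ f.support, ∑ n ∈ range N,
        (if j ≤ n then q i * (Nat.choose i (n - j) : F) * δ^[i - (n - j)] (f j) else 0) * δ^[n] c := by
    intro i _; exact Finset.sum_comm
  rw [sum_congr rfl swap2]
  have key : ∀ i ∈ q.support, ∀ j ∈ f.support,
      ∑ n ∈ range N,
        (if j ≤ n then q i * (Nat.choose i (n - j) : F) * δ^[i - (n - j)] (f j) else 0) * δ^[n] c
      = q i * δ^[i] (f j * δ^[j] c) := by
    intro i hi j hj
    have hij : i + j < N := hN i hi j hj
    rw [SKleibniz δ hadd hmul i (f j) (δ^[j] c)]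
    have sub : ∑ n ∈ range N,
        (if j ≤ n then q i * (Nat.choose i (n - j) : F) * δ^[i - (n - j)] (f j) else 0) * δ^[n] c
      = ∑ n ∈ Finset.Ico j (j + (i+1)),
        (if j ≤ n then q i * (Nat.choose i (n - j) : F) * δ^[i - (n - j)] (f j) else 0) * δ^[n] c := by
      symm
      apply sum_subset
      · intro n hn; rw [Finset.mem_Ico] at hn; rw [mem_range]; omega
      · intro n _ hn
        rw [Finset.mem_Ico] at hn
        rcases Nat.lt_or_ge n j with h | h
        · rw [if_neg (by omega), zero_mul]
        · have : i < n - j := by omega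
          rw [if_pos h, Nat.choose_eq_zero_of_lt this]
          simp
    rw [sub, Finset.sum_Ico_eq_sum_range]
    have h0 : j + (i+1) - j = i + 1 := by omega
    rw [h0, Finset.mul_sum]
    apply sum_congr rfl
    intro k hk
    rw [mem_range] at hk
    rw [if_pos (by omega : j ≤ j + k)]
    have h1 : j + k - j = k := by omega
    rw [h1, ← Function.iterate_add_apply δ k j c]
    have h2 : k + j = j + k := by omega
    rw [h2]
    ring
  rw [sum_congr rfl (fun i hi => sum_congr rfl (fun j hj => key i hi j hj))]
  apply sum_congr rfl
  intro i _
  rw [SKit_sum δ hadd hmul, Finset.mul_sum]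

theorem SKev_factor (q e f : ℕ →₀ F) (hq : ∀ n, f n = skewMul δ q e n) (c : F) :
    SKev δ f c = SKev δ q (SKev δ e c) := by
  set M := q.support.sup id + e.support.sup id + f.support.sup id + 2 with hM
  have hfs : f.support ⊆ range M := by
    intro n hn
    have := Finset.le_sup (f := id) hn
    rw [mem_range]; simp only [id] at this; omega
  rw [SKev_eq_sum δ hadd hmul f c hfs]
  rw [show ∑ n ∈ range M, f n * δ^[n] c = ∑ n ∈ range M, skewMul δ q e n * δ^[n] c from
    sum_congr rfl (fun n _ => by rw [hq n])]
  apply ev_skewMul δ hadd hmul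
  intro i hi j hj
  have h1 := Finset.le_sup (f := id) hi
  have h2 := Finset.le_sup (f := id) hj
  simp only [id] at h1 h2
  omega

theorem SKev_of_rdvd (e f : ℕ →₀ F) (h : RDvd δ e f) (c : F) (h0 : SKev δ e c = 0) :
    SKev δ f c = 0 := by
  obtain ⟨q, hq⟩ := h
  rw [SKev_factor δ hadd hmul q e f hq c, h0, SKev_zero δ hadd hmul]

end Aux

/-- The operator `x - a`. -/
noncomputable def dOp {F : Type*} [Field F] (a : F) : ℕ →₀ F :=
  Finsupp.single 1 1 - Finsupp.single 0 a

section Aux2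
variable {F : Type*} [Field F] (δ : F → F)
variable (hadd : ∀ a b : F, δ (a + b) = δ a + δ b)
variable (hmul : ∀ a b : F, δ (a * b) = a * δ b + δ a * b)

theorem dOp_zero (a : F) : dOp a 0 = -a := by
  simp [dOp, Finsupp.single_apply]

theorem dOp_one (a : F) : dOp a 1 = 1 := by
  simp [dOp, Finsupp.single_apply]

theorem dOp_bound (a : F) : ∀ n : ℕ, 1 < n → dOp a n = 0 := by
  intro n hn
  rw [dOp, Finsupp.sub_apply, Finsupp.single_apply, Finsupp.single_apply,
    if_neg (by omega : ¬ (1:ℕ) = n), if_neg (by omega : ¬ (0:ℕ) = n), sub_zero]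

theorem dOp_supp (a : F) : (dOp a).support ⊆ range 2 :=
  supp_subset_range (dOp a) 1 (dOp_bound a)

include hadd hmul

theorem SKev_dOp (a c : F) : SKev δ (dOp a) c = δ c - a * c := by
  rw [SKev_eq_sum δ hadd hmul (dOp a) c (dOp_supp a)]
  rw [Finset.sum_range_succ, Finset.sum_range_one, dOp_zero, dOp_one]
  simp only [Function.iterate_zero_apply, Function.iterate_one, one_mul]
  ring

theorem sum_single_apply (h : ℕ → F) (B m : ℕ) :
    (∑ n ∈ range B, Finsupp.single n (h n)) m = if m ∈ range B then h m else 0 := by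
  rw [Finsupp.finset_sum_apply]
  simp_rw [Finsupp.single_apply]
  exact Finset.sum_ite_eq' (range B) m h

theorem skewMul_single_dOp (b a : F) (N n : ℕ) :
    skewMul δ (Finsupp.single N b) (dOp a) n
      = (if n = N + 1 then b else 0) - b * (N.choose n : F) * δ^[N - n] a := by
  rw [skewMul_eq_sum δ hadd hmul _ _ n Finsupp.support_single_subset (dOp_supp a)]
  rw [Finset.sum_singleton, Finset.sum_range_succ, Finset.sum_range_one]
  rw [if_pos (Nat.zero_le n), Finsupp.single_eq_same, dOp_zero, dOp_one,
    SKit_neg δ hadd hmul]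
  simp only [Nat.sub_zero]
  rcases Nat.eq_zero_or_pos n with hn | hn
  · subst hn
    rw [if_neg (by omega : ¬ (1:ℕ) ≤ 0), if_neg (by omega : ¬ (0:ℕ) = N + 1)]
    ring
  · rw [if_pos (show 1 ≤ n by omega), SKit_one δ hadd hmul]
    rcases lt_trichotomy (n - 1) N with h | h | h
    · rw [if_neg (by omega : ¬ N - (n-1) = 0), if_neg (by omega : ¬ n = N + 1)]
      ring
    · rw [if_pos (by omega : N - (n-1) = 0), if_pos (by omega : n = N + 1), h, Nat.choose_self]
      simp only [Nat.choose_eq_zero_of_lt (show N < n by omega)]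
      push_cast; ring
    · rw [if_pos (by omega : N - (n-1) = 0), if_neg (by omega : ¬ n = N + 1)]
      simp only [Nat.choose_eq_zero_of_lt (show N < n by omega),
        Nat.choose_eq_zero_of_lt (show N < n - 1 by omega)]
      push_cast; ring

theorem div_dOp (a : F) : ∀ (N : ℕ) (f : ℕ →₀ F), (∀ n, N < n → f n = 0) →
    ∃ q : ℕ →₀ F, ∃ r : F, (∀ n, N - 1 < n → q n = 0) ∧
      (∀ n, f n = skewMul δ q (dOp a) n + (if n = 0 then r else 0)) := by
  intro N
  induction N with
  | zero =>
    intro f hf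
    refine ⟨0, f 0, fun n _ => rfl, fun n => ?_⟩
    rw [skewMul_zero_left δ hadd hmul, zero_add]
    cases n with
    | zero => rfl
    | succ n => rw [hf (n+1) (by omega)]; simp
  | succ N IH =>
    intro f hf
    set b := f (N+1) with hb
    set P : ℕ →₀ F :=
      ∑ n ∈ range (N+3), Finsupp.single n (skewMul δ (Finsupp.single N b) (dOp a) n) with hPdef
    have hsb : ∀ n : ℕ, N < n → (Finsupp.single N b : ℕ →₀ F) n = 0 := by
      intro n hn; rw [Finsupp.single_apply, if_neg (by omega)]
    have hP : ∀ m, P m = skewMul δ (Finsupp.single N b) (dOp a) m := by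
      intro m
      rw [hPdef, sum_single_apply δ hadd hmul]
      split
      · rfl
      · rename_i hm
        rw [mem_range, not_lt] at hm
        rw [skewMul_bound δ hadd hmul _ _ N 1 hsb (dOp_bound a) m (by omega)]
    have hf' : ∀ n, N < n → (f - P) n = 0 := by
      intro n hn
      rw [Finsupp.sub_apply, hP, skewMul_single_dOp δ hadd hmul]
      rcases Nat.eq_or_lt_of_le hn with h | h
      · have hn1 : n = N + 1 := by omega
        subst hn1
        rw [if_pos rfl, Nat.choose_eq_zero_of_lt (by omega), ← hb]
        push_cast; ring
      · rw [if_neg (by omega), Nat.choose_eq_zero_of_lt (by omega), hf n (by omega)]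
        push_cast; ring
    obtain ⟨q', r, hq'b, hq'⟩ := IH (f - P) hf'
    refine ⟨q' + Finsupp.single N b, r, ?_, ?_⟩
    · intro n hn
      rw [Finsupp.add_apply, hq'b n (by omega), Finsupp.single_apply,
        if_neg (by omega : ¬ N = n), add_zero]
    · intro n
      rw [skewMul_add_left δ hadd hmul, ← hP n]
      have h2 := hq' n
      rw [Finsupp.sub_apply] at h2
      linear_combination h2

theorem rdvd_dOp_of_ev (a c : F) (hc : c ≠ 0) (hevd : SKev δ (dOp a) c = 0)
    (f : ℕ →₀ F) (N : ℕ) (hfN : ∀ n, N < n → f n = 0) (hev : SKev δ f c = 0) :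
    ∃ q : ℕ →₀ F, (∀ n, N - 1 < n → q n = 0) ∧ ∀ n, f n = skewMul δ q (dOp a) n := by
  obtain ⟨q, r, hqb, hq⟩ := div_dOp δ hadd hmul a N f hfN
  have hr : r = 0 := by
    set M := q.support.sup id + (dOp a).support.sup id + f.support.sup id + 2 with hM
    have hfs : f.support ⊆ range M := by
      intro n hn
      have := Finset.le_sup (f := id) hn
      rw [mem_range]; simp only [id] at this; omega
    have e1 : SKev δ f c
        = ∑ n ∈ range M, (skewMul δ q (dOp a) n + (if n = 0 then r else 0)) * δ^[n] c := by
      rw [SKev_eq_sum δ hadd hmul f c hfs]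
      exact sum_congr rfl (fun n _ => by rw [hq n])
    simp_rw [add_mul, sum_add_distrib] at e1
    rw [ev_skewMul δ hadd hmul q (dOp a) c M (by
      intro i hi j hj
      have h1 := Finset.le_sup (f := id) hi
      have h2 := Finset.le_sup (f := id) hj
      simp only [id] at h1 h2
      omega)] at e1
    rw [hevd, SKev_zero δ hadd hmul, zero_add] at e1
    rw [Finset.sum_eq_single 0 (fun n _ hn => by rw [if_neg hn, zero_mul])
      (fun h => absurd (mem_range.mpr (by omega)) h)] at e1
    rw [if_pos rfl, Function.iterate_zero_apply] at e1
    rw [hev] at e1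
    exact (mul_eq_zero.mp e1.symm).resolve_right hc
  refine ⟨q, hqb, fun n => ?_⟩
  have := hq n
  rw [hr] at this
  simpa using this

end Aux2

section Aux3
variable {F : Type*} [Field F] (δ : F → F)
variable (hadd : ∀ a b : F, δ (a + b) = δ a + δ b)
variable (hmul : ∀ a b : F, δ (a * b) = a * δ b + δ a * b)
include hadd hmul

/-- solution-space dimension bound (Wronskian argument) -/
theorem wron : ∀ (m : ℕ) (c : Fin m → F), (∀ i, c i ≠ 0) →
    (∀ a : Fin m → F, (∀ i, δ (a i) = 0) → ∑ i, a i * c i = 0 → ∀ i, a i = 0) →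
    ∀ (f : ℕ →₀ F) (dg : ℕ), IsMonicOfDeg f dg → (∀ i, SKev δ f (c i) = 0) → m ≤ dg := by
  intro m
  induction m with
  | zero => intro _ _ _ _ dg _ _; exact Nat.zero_le dg
  | succ m IH =>
    intro c hc0 hli f dg hf hev
    obtain ⟨hf1, hfb⟩ := hf
    have hdg : 1 ≤ dg := by
      by_contra hd
      have hdg0 : dg = 0 := by omega
      subst hdg0
      have h1 : SKev δ f (c 0) = c 0 := by
        rw [SKev_eq_sum δ hadd hmul f (c 0) (supp_subset_range f 0 hfb), Finset.sum_range_one,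
          hf1, one_mul, Function.iterate_zero_apply]
      rw [hev 0] at h1
      exact hc0 0 h1.symm
    set a₀ := δ (c 0) / c 0 with ha₀
    have hevd : SKev δ (dOp a₀) (c 0) = 0 := by
      rw [SKev_dOp δ hadd hmul, ha₀, div_mul_cancel₀ _ (hc0 0), sub_self]
    obtain ⟨q, hqb, hq⟩ := rdvd_dOp_of_ev δ hadd hmul a₀ (c 0) (hc0 0) hevd f dg hfb (hev 0)
    have hlead := skewMul_lead δ hadd hmul q (dOp a₀) (dg - 1) 1 hqb (dOp_bound a₀)
    rw [show dg - 1 + 1 = dg from by omega, dOp_one, mul_one] at hlead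
    have hqmon : IsMonicOfDeg q (dg - 1) :=
      ⟨by have h2 := hq dg; rw [hf1, hlead] at h2; exact h2.symm, hqb⟩
    have key : ∀ i : Fin m, δ (c i.succ) - a₀ * c i.succ = δ (c i.succ / c 0) * c 0 := by
      intro i
      have h1 : c i.succ / c 0 * c 0 = c i.succ := div_mul_cancel₀ _ (hc0 0)
      have h2 := hmul (c i.succ / c 0) (c 0)
      rw [h1] at h2
      rw [h2, ha₀]
      ring
    have hevq : ∀ i : Fin m, SKev δ q (δ (c i.succ) - a₀ * c i.succ) = 0 := by
      intro i
      have h1 := SKev_factor δ hadd hmul q (dOp a₀) f hq (c i.succ)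
      rw [hev i.succ, SKev_dOp δ hadd hmul] at h1
      exact h1.symm
    have hB0 : ∀ i : Fin m, δ (c i.succ) - a₀ * c i.succ ≠ 0 := by
      intro i hzero
      rw [key i] at hzero
      have hδw : δ (c i.succ / c 0) = 0 :=
        (mul_eq_zero.mp hzero).resolve_right (hc0 0)
      set A : Fin (m+1) → F :=
        fun j => if j = 0 then c i.succ / c 0 else if j = i.succ then -1 else 0 with hA
      have hAj0 : A 0 = c i.succ / c 0 := by rw [hA]; simp
      have hAjs : ∀ j : Fin m, A j.succ = if j = i then (-1:F) else 0 := by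
        intro j
        rw [hA]
        dsimp only
        rw [if_neg (Fin.succ_ne_zero j)]
        by_cases hji : j = i
        · rw [if_pos (by rw [hji]), if_pos hji]
        · rw [if_neg (fun hc => hji (Fin.succ_inj.mp hc)), if_neg hji]
      have hAd : ∀ j, δ (A j) = 0 := by
        intro j
        cases j using Fin.cases with
        | zero => rw [hAj0]; exact hδw
        | succ j =>
          rw [hAjs j]
          by_cases hji : j = i
          · rw [if_pos hji, show (-1:F) = -(1:F) from rfl, SKd_neg δ hadd hmul,
              SKd_one δ hadd hmul, neg_zero]
          · rw [if_neg hji]; exact SKd_zero δ hadd hmul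
      have h3 : ∑ j : Fin m, (if j = i then (-1:F) else 0) * c j.succ = -c i.succ := by
        rw [Finset.sum_eq_single i (fun b _ hb => by rw [if_neg hb, zero_mul])
          (fun h => absurd (Finset.mem_univ i) h)]
        rw [if_pos rfl]; ring
      have hAs : ∑ j, A j * c j = 0 := by
        rw [Fin.sum_univ_succ, hAj0]
        rw [show (∑ j : Fin m, A j.succ * c j.succ)
            = ∑ j : Fin m, (if j = i then (-1:F) else 0) * c j.succ from
          sum_congr rfl (fun j _ => by rw [hAjs j])]
        rw [h3, div_mul_cancel₀ _ (hc0 0)]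
        ring
      have hfinal := hli A hAd hAs i.succ
      rw [hAjs i, if_pos rfl] at hfinal
      exact absurd hfinal (by norm_num)
    have hliB : ∀ μ : Fin m → F, (∀ i, δ (μ i) = 0) →
        ∑ i, μ i * (δ (c i.succ) - a₀ * c i.succ) = 0 → ∀ i, μ i = 0 := by
      intro μ hμd hμs
      set W : F := ∑ i, μ i * (c i.succ / c 0) with hW
      have hWd : δ W = 0 := by
        have h1 : δ W = ∑ i, μ i * δ (c i.succ / c 0) := by
          rw [hW, SKd_sum δ hadd hmul]
          apply sum_congr rfl; intro i _
          rw [hmul, hμd i]; ring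
        have h2 : δ W * c 0 = ∑ i, μ i * (δ (c i.succ) - a₀ * c i.succ) := by
          rw [h1, sum_mul]
          apply sum_congr rfl; intro i _
          rw [key i]; ring
        rw [hμs] at h2
        exact (mul_eq_zero.mp h2).resolve_right (hc0 0)
      have hWs : W * c 0 = ∑ i, μ i * c i.succ := by
        rw [hW, sum_mul]
        apply sum_congr rfl; intro i _
        rw [mul_assoc, div_mul_cancel₀ _ (hc0 0)]
      set A : Fin (m+1) → F := fun j => Fin.cases (-W) μ j with hA
      have hAj0 : A 0 = -W := by rw [hA]; simp
      have hAjs : ∀ j : Fin m, A j.succ = μ j := by intro j; rw [hA]; simp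
      have hAd : ∀ j, δ (A j) = 0 := by
        intro j
        cases j using Fin.cases with
        | zero => rw [hAj0, SKd_neg δ hadd hmul, hWd, neg_zero]
        | succ j => rw [hAjs j]; exact hμd j
      have hAs : ∑ j, A j * c j = 0 := by
        rw [Fin.sum_univ_succ, hAj0]
        rw [show (∑ j : Fin m, A j.succ * c j.succ) = ∑ j : Fin m, μ j * c j.succ from
          sum_congr rfl (fun j _ => by rw [hAjs j])]
        rw [← hWs]
        ring
      intro i
      have hfinal := hli A hAd hAs i.succ
      rw [hAjs i] at hfinal
      exact hfinal
    have := IH (fun i => δ (c i.succ) - a₀ * c i.succ) hB0 hliB q (dg - 1) hqmon hevq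
    omega

/-- construction of a common left multiple of degree ≤ m -/
theorem upper (m : ℕ) (c : Fin m → F) (hc0 : ∀ i, c i ≠ 0) :
    ∀ k, k ≤ m → ∃ h : ℕ →₀ F, ∃ dh : ℕ, dh ≤ k ∧ IsMonicOfDeg h dh ∧
      ∀ i : Fin m, (i : ℕ) < k → SKev δ h (c i) = 0 := by
  intro k
  induction k with
  | zero =>
    intro _
    refine ⟨Finsupp.single 0 1, 0, le_refl 0, ⟨Finsupp.single_eq_same, ?_⟩, fun i hi => by omega⟩
    intro n hn; rw [Finsupp.single_apply, if_neg (by omega)]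
  | succ k IH =>
    intro hk
    obtain ⟨h, dh, hdh, hmon, hann⟩ := IH (by omega)
    set i₀ : Fin m := ⟨k, by omega⟩ with hi₀
    by_cases hb : SKev δ h (c i₀) = 0
    · refine ⟨h, dh, by omega, hmon, fun i hi => ?_⟩
      rcases Nat.lt_or_ge (i : ℕ) k with h' | h'
      · exact hann i h'
      · have hii : i = i₀ := by
          apply Fin.ext; rw [hi₀]; simp; omega
        rw [hii]; exact hb
    · set bv := SKev δ h (c i₀) with hbv
      set av := δ bv / bv with hav
      set P : ℕ →₀ F :=
        ∑ n ∈ range (dh + 2), Finsupp.single n (skewMul δ (dOp av) h n) with hPdef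
      have hP : ∀ n, P n = skewMul δ (dOp av) h n := by
        intro n
        rw [hPdef, sum_single_apply δ hadd hmul]
        split
        · rfl
        · rename_i hm'
          rw [mem_range, not_lt] at hm'
          rw [skewMul_bound δ hadd hmul _ _ 1 dh (dOp_bound av) hmon.2 n (by omega)]
      refine ⟨P, dh + 1, by omega, ⟨?_, ?_⟩, ?_⟩
      · rw [hP]
        have hl := skewMul_lead δ hadd hmul (dOp av) h 1 dh (dOp_bound av) hmon.2
        rw [show 1 + dh = dh + 1 from by omega] at hl
        rw [hl, dOp_one, hmon.1, one_mul]
      · intro n hn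
        rw [hP, skewMul_bound δ hadd hmul _ _ 1 dh (dOp_bound av) hmon.2 n (by omega)]
      · intro i hi
        have hfac := SKev_factor δ hadd hmul (dOp av) h P hP (c i)
        rcases Nat.lt_or_ge (i : ℕ) k with h' | h'
        · rw [hfac, hann i h', SKev_zero δ hadd hmul]
        · have hii : i = i₀ := by
            apply Fin.ext; rw [hi₀]; simp; omega
          rw [hii] at hfac ⊢
          rw [hfac, ← hbv, SKev_dOp δ hadd hmul, hav,
            div_mul_cancel₀ _ hb, sub_self]

end Aux3

/-- Let `c_1, …, c_m` (`m ≤ p−1`) be nonzero and linearly independent over the constant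
field of a nonzero derivation `δ` of `F_q(z)` with `δ^p = γδ`.  If `g` is the monic least
left common multiple of the `x − L(c_i)` in `F_q(z)[x;δ]`, then `deg g = m` and `g` is a
right divisor of `x^p − γx`. -/
theorem lclm_deg_and_divides (Fq : Type*) [Field Fq] [Fintype Fq] (p : ℕ) [Fact p.Prime]
    [CharP Fq p]
    (δ : RatFunc Fq → RatFunc Fq)
    (hadd : ∀ a b : RatFunc Fq, δ (a + b) = δ a + δ b)
    (hmul : ∀ a b : RatFunc Fq, δ (a * b) = a * δ b + δ a * b)
    (hδ : δ ≠ 0)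
    (γ : RatFunc Fq) (hγ : δ γ = 0)
    (hp : ∀ f : RatFunc Fq, δ^[p] f = γ * δ f)
    (m : ℕ) (hm : m ≤ p - 1) (c : Fin m → RatFunc Fq) (hc0 : ∀ i, c i ≠ 0)
    (hli : ∀ a : Fin m → RatFunc Fq, (∀ i, δ (a i) = 0) → ∑ i, a i * c i = 0 → ∀ i, a i = 0)
    (g : ℕ →₀ RatFunc Fq)
    (hmonic : ∃ d : ℕ, IsMonicOfDeg g d)
    (hdvd : ∀ i, RDvd δ (Finsupp.single 1 1 - Finsupp.single 0 (δ (c i) / c i)) g)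
    (hgen : ∀ h : ℕ →₀ RatFunc Fq,
      (∀ i, RDvd δ (Finsupp.single 1 1 - Finsupp.single 0 (δ (c i) / c i)) h) →
      RDvd δ g h) :
    IsMonicOfDeg g m ∧
      RDvd δ g (Finsupp.single p 1 - Finsupp.single 1 γ) := by
  have hp2 : 2 ≤ p := (Fact.out : p.Prime).two_le
  obtain ⟨dgg, hgmon⟩ := hmonic
  have hevd : ∀ i, SKev δ (dOp (δ (c i) / c i)) (c i) = 0 := by
    intro i
    rw [SKev_dOp δ hadd hmul, div_mul_cancel₀ _ (hc0 i), sub_self]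
  have hann : ∀ i, SKev δ g (c i) = 0 := by
    intro i
    exact SKev_of_rdvd δ hadd hmul (dOp (δ (c i) / c i)) g (hdvd i) (c i) (hevd i)
  have hlow : m ≤ dgg := wron δ hadd hmul m c hc0 hli g dgg hgmon hann
  obtain ⟨H, dH, hdH, hHmon, hHann⟩ := upper δ hadd hmul m c hc0 m (le_refl m)
  have hHdvd : ∀ i, RDvd δ (Finsupp.single 1 1 - Finsupp.single 0 (δ (c i) / c i)) H := by
    intro i
    obtain ⟨q, hqbd, hq⟩ := rdvd_dOp_of_ev δ hadd hmul (δ (c i) / c i) (c i) (hc0 i)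
      (hevd i) H dH hHmon.2 (hHann i i.isLt)
    exact ⟨q, hq⟩
  obtain ⟨q, hqg⟩ := hgen H hHdvd
  have hup : dgg ≤ dH := by
    have hqne : q ≠ 0 := by
      intro h0
      have h1 := hqg dH
      rw [h0, skewMul_zero_left δ hadd hmul, hHmon.1] at h1
      exact one_ne_zero h1
    have hsne : q.support.Nonempty := Finsupp.support_nonempty_iff.mpr hqne
    set A := q.support.max' hsne with hA
    have hqA : q A ≠ 0 := Finsupp.mem_support_iff.mp (q.support.max'_mem hsne)
    have hqb : ∀ n, A < n → q n = 0 := by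
      intro n hn
      by_contra h0
      have := Finset.le_max' q.support n (Finsupp.mem_support_iff.mpr h0)
      omega
    have hlead := skewMul_lead δ hadd hmul q g A dgg hqb hgmon.2
    rw [hgmon.1, mul_one] at hlead
    have hH : H (A + dgg) = q A := by rw [hqg (A + dgg), hlead]
    by_contra hcon
    push_neg at hcon
    have hz := hHmon.2 (A + dgg) (by omega)
    rw [hz] at hH
    exact hqA hH.symm
  have hdgg : dgg = m := le_antisymm (hup.trans hdH) hlow
  constructor
  · rw [← hdgg]; exact hgmon
  · apply hgen
    intro i
    set X : ℕ →₀ RatFunc Fq := Finsupp.single p 1 - Finsupp.single 1 γ with hX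
    have hXb : ∀ n, p < n → X n = 0 := by
      intro n hn
      rw [hX, Finsupp.sub_apply, Finsupp.single_apply, Finsupp.single_apply,
        if_neg (by omega : ¬ p = n), if_neg (by omega : ¬ 1 = n), sub_zero]
    have hXsupp : X.support ⊆ ({1, p} : Finset ℕ) := by
      intro n hn
      rw [Finsupp.mem_support_iff] at hn
      rw [Finset.mem_insert, Finset.mem_singleton]
      by_contra hc
      push_neg at hc
      apply hn
      rw [hX, Finsupp.sub_apply, Finsupp.single_apply, Finsupp.single_apply,
        if_neg (fun h => hc.2 h.symm), if_neg (fun h => hc.1 h.symm), sub_zero]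
    have hX1 : X 1 = -γ := by
      rw [hX, Finsupp.sub_apply, Finsupp.single_apply, Finsupp.single_apply,
        if_neg (by omega : ¬ p = 1), if_pos rfl]
      ring
    have hXp : X p = 1 := by
      rw [hX, Finsupp.sub_apply, Finsupp.single_apply, Finsupp.single_apply,
        if_pos rfl, if_neg (by omega : ¬ 1 = p), sub_zero]
    have hXev : SKev δ X (c i) = 0 := by
      rw [SKev_eq_sum δ hadd hmul X (c i) hXsupp,
        Finset.sum_pair (by omega : (1:ℕ) ≠ p), hX1, hXp]
      simp only [Function.iterate_one]
      rw [hp (c i)]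
      ring
    obtain ⟨qq, hqqb, hqq⟩ := rdvd_dOp_of_ev δ hadd hmul (δ (c i) / c i) (c i) (hc0 i)
      (hevd i) X p hXb hXev
    exact ⟨qq, hqq⟩
end

section
/- Let C be the differential convolutional code with codewords vanishing under the syndromes s_i = y[L(δ^i(α))], and let e = e_1 x^{k_1} + … + e_v x^{k_v} be the error with v ≤ τ = ⌊(d−1)/2⌋. Then for 0 ≤ i ≤ 2τ − 1, δ^i(α)·s_i = Σ_{j=1}^v e_j δ^{i+k_j}(α), and (e_1,…,e_v) is the unique solution of the first v of these equations. -/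
/-!
Multiplying the `i`-th syndrome by `a = δ^i(α)` turns right evaluation at `L(a) = δ(a)/a`
into `w ↦ ∑ₘ wₘ δ^m(a)`, because `a · N_m(δ(a)/a) = δ^m(a)`. The codeword drops out, which
gives the equations. Their first `v` rows form the Wronskian system of
`δ^{k_1}(α), …, δ^{k_v}(α)`, which are linearly independent over the constants of `δ`;
such a system has only the trivial solution (differentiate a normalized solution and induct
on `v`), so the solution is unique.
-/

open scoped BigOperators

open Finset Function

theorem exists_derivation_coe_eq {A : Type*} [CommRing A] (δ : A → A)
    (hadd : ∀ a b, δ (a + b) = δ a + δ b) (hmul : ∀ a b, δ (a * b) = a * δ b + δ a * b) :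
    ∃ D : Derivation ℤ A A, ⇑D = δ := by
  refine ⟨
    { toFun := δ
      map_add' := hadd
      map_smul' := fun n a => ?_
      map_one_eq_zero' := by simpa using hmul 1 1
      leibniz' := fun a b => ?_ }, rfl⟩
  · exact map_zsmul (AddMonoidHom.mk' δ hadd) n a
  · rw [smul_eq_mul, smul_eq_mul, mul_comm b]
    exact hmul a b

section LinearIndepOverConstants

variable {F : Type*} [Field F] (D : Derivation ℤ F F)

def LinearIndepOverConstants {ι : Type*} [Fintype ι] (u : ι → F) : Prop :=
  ∀ b : ι → F, (∀ j, D (b j) = 0) → ∑ j, b j * u j = 0 → ∀ j, b j = 0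

variable {D}

theorem LinearIndepOverConstants.ne_zero {ι : Type*} [Fintype ι] [DecidableEq ι] {u : ι → F}
    (hu : LinearIndepOverConstants D u) (i : ι) : u i ≠ 0 := by
  intro hui
  have hD : ∀ j, D ((Pi.single i 1 : ι → F) j) = 0 := fun j => by
    rcases eq_or_ne j i with rfl | hj
    · simp
    · simp [hj]
  have hsum : ∑ j, (Pi.single i 1 : ι → F) j * u j = 0 := by
    rw [Fintype.sum_eq_single i fun j hj => by simp [hj], hui, mul_zero]
  simpa using hu _ hD hsum i

theorem LinearIndepOverConstants.comp {ι κ : Type*} [Fintype ι] [Fintype κ] {u : κ → F}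
    (hu : LinearIndepOverConstants D u) {k : ι → κ} (hk : Injective k) :
    LinearIndepOverConstants D (u ∘ k) := by
  intro b hb hsum j
  have hD : ∀ m, D (extend k b 0 m) = 0 := fun m => by
    by_cases hm : ∃ j, k j = m
    · obtain ⟨j, rfl⟩ := hm
      rw [hk.extend_apply, hb]
    · rw [extend_apply' _ _ _ hm, Pi.zero_apply, map_zero]
  have hsum' : ∑ m, extend k b 0 m * u m = 0 := by
    rw [← hsum]
    refine (Fintype.sum_of_injective k hk _ _ (fun m hm => ?_) fun j => ?_).symm
    · rw [extend_apply' _ _ _ hm, Pi.zero_apply, zero_mul]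
    · rw [hk.extend_apply, comp_apply]
  simpa [hk.extend_apply] using hu _ hD hsum' (k j)

/-- The Wronskian matrix of a family that is linearly independent over the constants is
nonsingular. -/
theorem LinearIndepOverConstants.eq_zero_of_sum_iterate_eq_zero {v : ℕ} {u : Fin v → F}
    (hu : LinearIndepOverConstants D u) {f : Fin v → F}
    (hf : ∀ i < v, ∑ j, f j * D^[i] (u j) = 0) : f = 0 := by
  induction v with
  | zero => exact Subsingleton.elim _ _
  | succ n ih =>
    by_contra hne
    obtain ⟨j₀, hj₀⟩ := Function.ne_iff.mp hne
    set g : Fin (n + 1) → F := fun j => f j / f j₀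
    have hg₀ : g j₀ = 1 := div_self hj₀
    have hg : ∀ i < n + 1, ∑ j, g j * D^[i] (u j) = 0 := fun i hi => by
      simp only [g, div_mul_eq_mul_div, ← sum_div, hf i hi, zero_div]
    have hDg : ∀ i < n, ∑ j, D (g j) * D^[i] (u j) = 0 := fun i hi =>
      calc ∑ j, D (g j) * D^[i] (u j)
          = D (∑ j, g j * D^[i] (u j)) - ∑ j, g j * D^[i + 1] (u j) := by
            rw [map_sum, ← sum_sub_distrib]
            refine sum_congr rfl fun j _ => ?_
            rw [D.leibniz, iterate_succ_apply', smul_eq_mul, smul_eq_mul]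
            ring
        _ = 0 := by rw [hg i (by omega), hg (i + 1) (by omega), map_zero, sub_zero]
    have hconst : ∀ j, D (g j) = 0 := by
      have hrest := ih (hu.comp (Fin.succAbove_right_injective (p := j₀)))
        (f := fun j => D (g (j₀.succAbove j))) fun i hi => by
          simpa [Fin.sum_univ_succAbove _ j₀, hg₀] using hDg i hi
      intro j
      rcases Fin.eq_self_or_eq_succAbove j₀ j with rfl | ⟨j, rfl⟩
      · rw [hg₀, D.map_one_eq_zero]
      · exact congrFun hrest j
    simpa [hg₀] using hu g hconst (by simpa using hg 0 n.succ_pos) j₀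

end LinearIndepOverConstants

section RightEvaluation

variable {F : Type*} [Field F]

theorem mul_Nrec_eq_iterate (D : Derivation ℤ F F)
    {a : F} (ha : a ≠ 0) (m : ℕ) : a * Nrec D (D a / a) m = D^[m] a := by
  induction m with
  | zero => simp [Nrec]
  | succ m ih =>
    rw [iterate_succ_apply', ← ih, D.leibniz, Nrec, smul_eq_mul, smul_eq_mul]
    field_simp
    ring

theorem mul_sum_mul_Nrec {n : ℕ} (D : Derivation ℤ F F) {a : F} (ha : a ≠ 0) (w : Fin n → F) :
    a * ∑ m, w m * Nrec D (D a / a) m = ∑ m, w m * D^[m] a := by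
  simp only [mul_sum, mul_left_comm a, mul_Nrec_eq_iterate D ha]
end RightEvaluation

theorem sum_indicator_mul {ι κ R : Type*} [Fintype ι] [Fintype κ] [DecidableEq κ]
    [NonUnitalNonAssocSemiring R] (k : ι → κ) (e : ι → R) (X : κ → R) :
    ∑ m, (∑ j, if k j = m then e j else 0) * X m = ∑ j, e j * X (k j) := by
  simp only [sum_mul, ite_mul, zero_mul]
  rw [sum_comm]
  simp

theorem syndrome_equations_general (Fq : Type*) [Field Fq]
    (p : ℕ)
    (δ : RatFunc Fq → RatFunc Fq)
    (hadd : ∀ a b : RatFunc Fq, δ (a + b) = δ a + δ b)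
    (hmul : ∀ a b : RatFunc Fq, δ (a * b) = a * δ b + δ a * b)
    (α : RatFunc Fq)
    (hli : ∀ a : Fin p → RatFunc Fq, (∀ i, δ (a i) = 0) →
      ∑ i, a i * δ^[(i : ℕ)] α = 0 → ∀ i, a i = 0)
    (d : ℕ) (hdp : d ≤ p)
    (v : ℕ) (hv : v ≤ (d - 1) / 2)
    (k : Fin v → Fin p) (hk : Function.Injective k)
    (e : Fin v → RatFunc Fq)
    -- `c` is a codeword: it is annihilated by right evaluation at `L(δ^i(α))`, `i ≤ d−2`
    (c : Fin p → RatFunc Fq)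
    (hc : ∀ i : ℕ, i + 1 < d →
      ∑ m : Fin p, c m * Nrec δ (δ (δ^[i] α) / δ^[i] α) (m : ℕ) = 0)
    -- the received word `y = c + e`
    (y : Fin p → RatFunc Fq)
    (hy : ∀ m : Fin p, y m = c m + ∑ j, if k j = m then e j else 0)
    -- the syndromes `s_i = y[L(δ^i(α))]`
    (s : ℕ → RatFunc Fq)
    (hs : ∀ i : ℕ, s i = ∑ m : Fin p, y m * Nrec δ (δ (δ^[i] α) / δ^[i] α) (m : ℕ)) :
    (∀ i : ℕ, i < 2 * ((d - 1) / 2) →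
        δ^[i] α * s i = ∑ j, e j * δ^[i + (k j : ℕ)] α) ∧
    (∀ e' : Fin v → RatFunc Fq,
        (∀ i : ℕ, i < v → δ^[i] α * s i = ∑ j, e' j * δ^[i + (k j : ℕ)] α) →
        e' = e) := by
  obtain ⟨D, rfl⟩ := exists_derivation_coe_eq δ hadd hmul
  have hli : LinearIndepOverConstants D fun m : Fin p => D^[m] α := hli
  have equations : ∀ i < 2 * ((d - 1) / 2), D^[i] α * s i = ∑ j, e j * D^[i + k j] α := by
    intro i hi
    have ha : D^[i] α ≠ 0 := hli.ne_zero ⟨i, by omega⟩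
    have hc' : ∑ m, c m * D^[m] (D^[i] α) = 0 := by
      rw [← mul_sum_mul_Nrec D ha, hc i (by omega), mul_zero]
    calc D^[i] α * s i = ∑ m, y m * D^[m] (D^[i] α) := by rw [hs, mul_sum_mul_Nrec D ha]
      _ = ∑ j, e j * D^[k j] (D^[i] α) := by
        simp only [hy, add_mul, sum_add_distrib, hc', zero_add, sum_indicator_mul]
      _ = ∑ j, e j * D^[i + k j] α := by simp only [← iterate_add_apply, add_comm i]
  refine ⟨equations, fun e' he' => ?_⟩
  have hwronski : ∀ i < v, ∑ j, (e' j - e j) * D^[i] (D^[k j] α) = 0 := fun i hi => by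
    simp only [sub_mul, sum_sub_distrib, ← iterate_add_apply, ← he' i hi,
      ← equations i (by omega), sub_self]
  exact funext fun j => sub_eq_zero.mp <|
    congrFun ((hli.comp hk).eq_zero_of_sum_iterate_eq_zero hwronski) j

/-- Syndrome equations for an RS differential convolutional code of designed distance
`d`: if `y = c + e` with `c` in the code and error `e = e_1 x^{k_1} + … + e_v x^{k_v}`,
`v ≤ τ = ⌊(d−1)/2⌋`, then `δ^i(α)·s_i = ∑_j e_j δ^{i+k_j}(α)` for `0 ≤ i ≤ 2τ−1`,
where `s_i = y[L(δ^i(α))]` is the `i`-th syndrome, and `(e_1, …, e_v)` is the unique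
solution of the first `v` of these equations. -/
theorem syndrome_equations (Fq : Type*) [Field Fq] [Fintype Fq]
    (p : ℕ) [Fact p.Prime] [CharP Fq p]
    (δ : RatFunc Fq → RatFunc Fq)
    (hadd : ∀ a b : RatFunc Fq, δ (a + b) = δ a + δ b)
    (hmul : ∀ a b : RatFunc Fq, δ (a * b) = a * δ b + δ a * b)
    (hδ : δ ≠ 0)
    (α : RatFunc Fq)
    (hli : ∀ a : Fin p → RatFunc Fq, (∀ i, δ (a i) = 0) →
      ∑ i, a i * δ^[(i : ℕ)] α = 0 → ∀ i, a i = 0)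
    (hspan : ∀ f : RatFunc Fq, ∃ a : Fin p → RatFunc Fq,
      (∀ i, δ (a i) = 0) ∧ f = ∑ i, a i * δ^[(i : ℕ)] α)
    (d : ℕ) (hd1 : 1 ≤ d) (hdp : d ≤ p)
    (v : ℕ) (hv : v ≤ (d - 1) / 2)
    (k : Fin v → Fin p) (hk : Function.Injective k)
    (e : Fin v → RatFunc Fq) (he : ∀ j, e j ≠ 0)
    -- `c` is a codeword: it is annihilated by right evaluation at `L(δ^i(α))`, `i ≤ d−2`
    (c : Fin p → RatFunc Fq)
    (hc : ∀ i : ℕ, i + 1 < d →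
      ∑ m : Fin p, c m * Nrec δ (δ (δ^[i] α) / δ^[i] α) (m : ℕ) = 0)
    -- the received word `y = c + e`
    (y : Fin p → RatFunc Fq)
    (hy : ∀ m : Fin p, y m = c m + ∑ j, if k j = m then e j else 0)
    -- the syndromes `s_i = y[L(δ^i(α))]`
    (s : ℕ → RatFunc Fq)
    (hs : ∀ i : ℕ, s i = ∑ m : Fin p, y m * Nrec δ (δ (δ^[i] α) / δ^[i] α) (m : ℕ)) :
    (∀ i : ℕ, i < 2 * ((d - 1) / 2) →
        δ^[i] α * s i = ∑ j, e j * δ^[i + (k j : ℕ)] α) ∧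
    (∀ e' : Fin v → RatFunc Fq,
        (∀ i : ℕ, i < v → δ^[i] α * s i = ∑ j, e' j * δ^[i + (k j : ℕ)] α) →
        e' = e) :=
  syndrome_equations_general Fq p δ hadd hmul α hli d hdp v hv k hk e c hc y hy s hs
end

section
/- With error positions k_1, …, k_v and error locator polynomial λ = [x − L(δ^{k_1}(α)), …, x − L(δ^{k_v}(α))]_ℓ, a position t ∈ {0,…,p−1} satisfies t ∈ {k_1,…,k_v} if and only if L(δ^t(α)) is a right root of λ. -/
open scoped BigOperators

/-!
Write `∂` for `δ` acting on `F_q(z)` and `L β = δ β / β`. Since `N_i(L β) = δ^i β / β`, right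
evaluation at `L β` is `g ↦ g(∂) β / β`, and right division by `x - L β` shows that `L β` is a
right root of `g` exactly when `g(∂) β = 0`; this gives the forward direction. Conversely,
composing factors `∂ - L γ` yields a monic annihilator `h` of order at most `v` of all the
`δ^{k_j} α`; it is a left common multiple of the `x - L(δ^{k_j} α)`, so `λ` right-divides it. If
`L(δ^t α)` were a right root of `λ` for a new position `t`, then `h(∂)` would kill `v + 1` of the
`δ^i α`, which are independent over the constants, whereas by reduction of order an equation of
order `d` has at most `d` such solutions.
-/

open Finset

theorem Finset.sum_range_ite_le {M : Type*} [AddCommMonoid M] (G : ℕ → M) {j N : ℕ}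
    (hj : j ≤ N) :
    ∑ n ∈ range N, (if j ≤ n then G n else 0) = ∑ m ∈ range (N - j), G (m + j) := by
  obtain ⟨K, rfl⟩ := Nat.exists_eq_add_of_le hj
  rw [sum_range_add, sum_eq_zero fun n hn => if_neg (not_le.2 (mem_range.1 hn)), zero_add]
  simp [add_comm j]

theorem Finsupp.support_subset_range {M : Type*} [Zero M] {g : ℕ →₀ M} {N : ℕ}
    (hg : ∀ n, N ≤ n → g n = 0) : g.support ⊆ range N := fun n hn =>
  mem_range.2 (not_le.1 fun h => Finsupp.mem_support_iff.1 hn (hg n h))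

namespace Derivation

section CommRing

variable {A : Type*} [CommRing A]

theorem exists_coe_eq (δ : A → A) (hadd : ∀ a b, δ (a + b) = δ a + δ b)
    (hmul : ∀ a b, δ (a * b) = a * δ b + δ a * b) : ∃ D : Derivation ℤ A A, ⇑D = δ :=
  ⟨Derivation.mk' (AddMonoidHom.mk' δ hadd).toIntLinearMap fun a b => by
    simpa [mul_comm] using hmul a b, rfl⟩

variable (D : Derivation ℤ A A)

theorem iterate_map_sum (n : ℕ) {ι : Type*} (s : Finset ι) (f : ι → A) :
    D^[n] (∑ i ∈ s, f i) = ∑ i ∈ s, D^[n] (f i) := by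
  simpa only [Module.End.coe_pow, coeFn_coe] using map_sum ((D : A →ₗ[ℤ] A) ^ n) f s

theorem iterate_apply_mul (n : ℕ) (a b : A) :
    D^[n] (a * b) = ∑ ij ∈ antidiagonal n, n.choose ij.1 • (D^[ij.2] a * D^[ij.1] b) := by
  induction n with
  | zero => simp
  | succ n ih =>
    rw [Finset.sum_antidiagonal_choose_succ_nsmul (fun i j => D^[j] a * D^[i] b) n]
    simp only [Function.iterate_succ_apply', ih, map_sum, map_nsmul, leibniz, smul_eq_mul,
      smul_add, sum_add_distrib]
    rw [add_comm]
    congr 1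
    · exact sum_congr rfl fun ij _ => by rw [mul_comm]
    · refine sum_congr rfl fun ij hij => ?_
      rw [n.choose_symm_of_eq_add (mem_antidiagonal.1 hij).symm]

theorem iterate_apply_mul_eq_sum_range {n M : ℕ} (hn : n < M) (a b : A) :
    D^[n] (a * b) = ∑ m ∈ range M, (n.choose m : A) * D^[n - m] a * D^[m] b := by
  rw [iterate_apply_mul, Nat.sum_antidiagonal_eq_sum_range_succ
    (fun i j => n.choose i • (D^[j] a * D^[i] b)) n]
  refine sum_subset (range_subset_range.2 hn) (fun m _ hm => ?_) |>.trans
    (sum_congr rfl fun m _ => by rw [nsmul_eq_mul, mul_assoc])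
  rw [Nat.choose_eq_zero_of_lt (by simpa using hm), zero_smul]

def applyOp (g : ℕ →₀ A) (y : A) : A :=
  g.sum fun i c => c * D^[i] y

theorem applyOp_eq_sum_range {g : ℕ →₀ A} {N : ℕ} (hg : ∀ n, N ≤ n → g n = 0) (y : A) :
    D.applyOp g y = ∑ n ∈ range N, g n * D^[n] y :=
  Finsupp.sum_of_support_subset _ (Finsupp.support_subset_range hg) _ fun _ _ => zero_mul _

@[simp]
theorem applyOp_zero_right (g : ℕ →₀ A) : D.applyOp g 0 = 0 := by
  simp [applyOp, iterate_map_zero]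

@[simp]
theorem applyOp_single (n : ℕ) (c y : A) : D.applyOp (Finsupp.single n c) y = c * D^[n] y :=
  Finsupp.sum_single_index (zero_mul _)

@[simp]
theorem applyOp_sub (g₁ g₂ : ℕ →₀ A) (y : A) :
    D.applyOp (g₁ - g₂) y = D.applyOp g₁ y - D.applyOp g₂ y :=
  Finsupp.sum_sub_index fun _ _ _ => sub_mul _ _ _

@[simp]
theorem applyOp_add (g₁ g₂ : ℕ →₀ A) (y : A) :
    D.applyOp (g₁ + g₂) y = D.applyOp g₁ y + D.applyOp g₂ y :=
  Finsupp.sum_add_index' (fun _ => zero_mul _) fun _ _ _ => add_mul _ _ _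

theorem sum_mul_iterate_mul (c : ℕ → A) (N : ℕ) (z u : A) :
    ∑ i ∈ range N, c i * D^[i] (z * u) =
      ∑ m ∈ range N, (∑ i ∈ range N, c i * i.choose m * D^[i - m] z) * D^[m] u := by
  calc ∑ i ∈ range N, c i * D^[i] (z * u)
      = ∑ i ∈ range N, ∑ m ∈ range N, c i * i.choose m * D^[i - m] z * D^[m] u :=
        sum_congr rfl fun i hi => by
          rw [D.iterate_apply_mul_eq_sum_range (mem_range.1 hi), mul_sum]
          simp only [mul_assoc]
    _ = _ := by
        rw [sum_comm]
        simp only [sum_mul]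

end CommRing

section Field

variable {F : Type*} [Field F] (D : Derivation ℤ F F)

theorem skewMul_eq_zero_of_add_le {q f : ℕ →₀ F} {Nq Nf n : ℕ} (hq : q.support ⊆ range Nq)
    (hf : f.support ⊆ range Nf) (hn : Nq + Nf ≤ n + 1) : skewMul D q f n = 0 := by
  refine sum_eq_zero fun i hi => sum_eq_zero fun j hj => ?_
  have := mem_range.1 (hq hi)
  have := mem_range.1 (hf hj)
  rw [Nat.choose_eq_zero_of_lt (by omega)]
  simp

theorem applyOp_of_skewMul {g q f : ℕ →₀ F} (hg : ∀ n, g n = skewMul D q f n) (y : F) :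
    D.applyOp g y = D.applyOp q (D.applyOp f y) := by
  obtain ⟨Nq, hq⟩ := q.support.exists_nat_subset_range
  obtain ⟨Nf, hf⟩ := f.support.exists_nat_subset_range
  rw [D.applyOp_eq_sum_range (N := Nq + Nf)
    fun n hn => (hg n).trans (D.skewMul_eq_zero_of_add_le hq hf (by omega))]
  simp only [hg, skewMul, sum_mul, applyOp, Finsupp.sum, iterate_map_sum, mul_sum]
  rw [sum_comm]
  refine sum_congr rfl fun i hi => ?_
  rw [sum_comm]
  refine sum_congr rfl fun j hj => ?_
  have hi := mem_range.1 (hq hi)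
  have hj := mem_range.1 (hf hj)
  simp only [ite_mul, zero_mul]
  rw [sum_range_ite_le (N := Nq + Nf) _ (by omega),
    D.iterate_apply_mul_eq_sum_range (M := Nq + Nf - j) (by omega), mul_sum]
  refine sum_congr rfl fun m _ => ?_
  simp only [Nat.add_sub_cancel, Function.iterate_add_apply]
  ring

theorem _root_.RDvd.applyOp_eq_zero {D : Derivation ℤ F F} {f g : ℕ →₀ F} (h : RDvd D f g)
    {y : F} (hy : D.applyOp f y = 0) : D.applyOp g y = 0 := by
  obtain ⟨q, hq⟩ := h
  rw [D.applyOp_of_skewMul hq, hy, applyOp_zero_right]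

theorem skewMul_add_left (q₁ q₂ f : ℕ →₀ F) (n : ℕ) :
    skewMul D (q₁ + q₂) f n = skewMul D q₁ f n + skewMul D q₂ f n := by
  refine Finsupp.sum_add_index' (h := fun i c => ∑ j ∈ f.support,
    if j ≤ n then c * (i.choose (n - j) : F) * D^[i - (n - j)] (f j) else 0)
    (fun _ => by simp) fun i c₁ c₂ => ?_
  rw [← sum_add_distrib]
  refine sum_congr rfl fun j _ => ?_
  split_ifs <;> ring

theorem skewMul_add_eq_mul {q f : ℕ →₀ F} {dq df : ℕ} (hq : q.support ⊆ range (dq + 1))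
    (hf : f.support ⊆ range (df + 1)) : skewMul D q f (dq + df) = q dq * f df := by
  rw [skewMul, sum_eq_single dq, sum_eq_single df]
  · simp
  · intro j hj hne
    have := mem_range.1 (hf hj)
    rw [if_pos (by omega), Nat.choose_eq_zero_of_lt (by omega)]
    simp
  · intro hdf
    simp [Finsupp.notMem_support_iff.1 hdf, iterate_map_zero]
  · intro i hi hne
    refine sum_eq_zero fun j hj => ?_
    have := mem_range.1 (hq hi)
    have := mem_range.1 (hf hj)
    rw [if_pos (by omega), Nat.choose_eq_zero_of_lt (by omega)]
    simp
  · intro hdq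
    simp [Finsupp.notMem_support_iff.1 hdq]

theorem skewMul_single_X_sub_C {N n : ℕ} (hn : N < n) (c a : F) :
    skewMul D (Finsupp.single N c) (Finsupp.single 1 1 - Finsupp.single 0 a) n =
      if n = N + 1 then c else 0 := by
  have hq : (Finsupp.single N c).support ⊆ range (N + 1) :=
    Finsupp.support_single_subset.trans (singleton_subset_iff.2 (self_mem_range_succ N))
  have hf : (Finsupp.single 1 1 - Finsupp.single 0 a).support ⊆ range 2 :=
    Finsupp.support_subset_range fun m hm => by
      simp only [Finsupp.sub_apply, Finsupp.single_apply, if_neg (show 1 ≠ m by omega),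
        if_neg (show 0 ≠ m by omega), sub_zero]
  split_ifs with h
  · subst h
    simpa using D.skewMul_add_eq_mul hq hf
  · exact D.skewMul_eq_zero_of_add_le hq hf (by omega)

theorem exists_eq_skewMul_X_sub_C_add_single (a : F) (g : ℕ →₀ F) :
    ∃ (q : ℕ →₀ F) (r : F), ∀ n,
      g n = skewMul D q (Finsupp.single 1 1 - Finsupp.single 0 a) n + Finsupp.single 0 r n := by
  suffices ∀ N (g : ℕ → F), (∀ n, N < n → g n = 0) → ∃ (q : ℕ →₀ F) (r : F), ∀ n,
      g n = skewMul D q (Finsupp.single 1 1 - Finsupp.single 0 a) n + Finsupp.single 0 r n by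
    obtain ⟨N, hN⟩ := g.support.exists_nat_subset_range
    exact this N g fun n hn => Finsupp.notMem_support_iff.1 fun h => by
      have := mem_range.1 (hN h)
      omega
  intro N
  induction N with
  | zero =>
    intro g hg
    refine ⟨0, g 0, fun n => ?_⟩
    rcases n with _ | n
    · simp [skewMul]
    · simp [skewMul, hg]
  | succ N ih =>
    intro g hg
    obtain ⟨q, r, hqr⟩ := ih (fun n => g n - skewMul D (Finsupp.single N (g (N + 1)))
        (Finsupp.single 1 1 - Finsupp.single 0 a) n) fun n hn => by
      rw [D.skewMul_single_X_sub_C hn]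
      split_ifs with h
      · simp [h]
      · rw [hg n (by omega), sub_zero]
    exact ⟨Finsupp.single N (g (N + 1)) + q, r, fun n => by
      rw [skewMul_add_left]
      linear_combination hqr n⟩

theorem rdvd_X_sub_logDeriv_of_applyOp_eq_zero {β : F} (hβ : β ≠ 0) {g : ℕ →₀ F}
    (hg : D.applyOp g β = 0) :
    RDvd D (Finsupp.single 1 1 - Finsupp.single 0 (D β / β)) g := by
  obtain ⟨q, r, hqr⟩ := D.exists_eq_skewMul_X_sub_C_add_single (D β / β) g
  have hrem : D.applyOp (g - Finsupp.single 0 r) β = 0 := by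
    rw [D.applyOp_of_skewMul (q := q) (f := Finsupp.single 1 1 - Finsupp.single 0 (D β / β))
      fun n => by simp [hqr n]]
    simp [div_mul_cancel₀ _ hβ]
  obtain rfl : r = 0 := by simpa [hg, hβ] using hrem
  exact ⟨q, by simpa using hqr⟩

theorem Nrec_logDeriv {β : F} (hβ : β ≠ 0) (i : ℕ) : Nrec D (D β / β) i = D^[i] β / β := by
  induction i with
  | zero => simp [Nrec, hβ]
  | succ i ih =>
    rw [Nrec, ih, leibniz_div, Function.iterate_succ_apply', smul_eq_mul, smul_eq_mul,
      smul_eq_mul]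
    field_simp
    ring

theorem sum_Nrec_logDeriv_eq_zero_iff {β : F} (hβ : β ≠ 0) (g : ℕ →₀ F) :
    ∑ i ∈ g.support, g i * Nrec D (D β / β) i = 0 ↔ D.applyOp g β = 0 := by
  simp only [D.Nrec_logDeriv hβ, ← mul_div_assoc, ← sum_div, div_eq_zero_iff, hβ, or_false]
  rfl

theorem exists_isMonicOfDeg_X_sub_mul {h : ℕ →₀ F} {d : ℕ} (hh : IsMonicOfDeg h d) (a : F) :
    ∃ h' : ℕ →₀ F, IsMonicOfDeg h' (d + 1) ∧
      ∀ y, D.applyOp h' y = D (D.applyOp h y) - a * D.applyOp h y := by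
  refine ⟨h.mapDomain Nat.succ + h.mapRange (fun c => D c - a * c) (by simp), ⟨?_, ?_⟩, ?_⟩
  · simp [Finsupp.mapDomain_apply Nat.succ_injective, hh.1, hh.2 (d + 1) (by omega)]
  · intro n hn
    obtain ⟨m, rfl⟩ := Nat.exists_eq_add_of_lt hn
    simp [Finsupp.mapDomain_apply Nat.succ_injective, hh.2 (d + 1 + m) (by omega),
      hh.2 (d + 1 + m + 1) (by omega)]
  · intro y
    rw [applyOp_add, applyOp, applyOp, Finsupp.sum_mapDomain_index (fun _ => zero_mul _)
      (fun _ _ _ => add_mul _ _ _), Finsupp.sum_mapRange_index (fun _ => zero_mul _),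
      applyOp, map_finsuppSum, Finsupp.mul_sum, ← Finsupp.sum_add, ← Finsupp.sum_sub]
    refine Finsupp.sum_congr fun i _ => ?_
    rw [leibniz, Function.iterate_succ_apply', smul_eq_mul, smul_eq_mul]
    ring

theorem exists_isMonicOfDeg_applyOp_eq_zero (v : ℕ) (β : Fin v → F) :
    ∃ (h : ℕ →₀ F) (d : ℕ), d ≤ v ∧ IsMonicOfDeg h d ∧ ∀ j, D.applyOp h (β j) = 0 := by
  induction v with
  | zero => exact ⟨Finsupp.single 0 1, 0, le_rfl, ⟨by simp, fun n hn => by simp [hn.ne]⟩,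
      fun j => j.elim0⟩
  | succ v ih =>
    obtain ⟨h, d, hdv, hh, hann⟩ := ih (fun j => β j.castSucc)
    set γ := D.applyOp h (β (Fin.last v))
    by_cases hγ : γ = 0
    · exact ⟨h, d, by omega, hh, Fin.lastCases hγ hann⟩
    obtain ⟨h', hh', happ⟩ := D.exists_isMonicOfDeg_X_sub_mul hh (D γ / γ)
    refine ⟨h', d + 1, by omega, hh', Fin.lastCases ?_ fun j => ?_⟩
    · rw [happ, div_mul_cancel₀ _ hγ, sub_self]
    · rw [happ, hann j, map_zero, mul_zero, sub_zero]

def LinearIndependentOverConstants {ι : Type*} [Fintype ι] (w : ι → F) : Prop :=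
  ∀ a : ι → F, (∀ i, D (a i) = 0) → ∑ i, a i * w i = 0 → ∀ i, a i = 0

namespace LinearIndependentOverConstants

variable {D} {ι : Type*} [Fintype ι] {w : ι → F}

theorem ne_zero (hw : LinearIndependentOverConstants D w) (i : ι) : w i ≠ 0 := by
  classical
  intro hwi
  have hc : ∀ j, D ((Pi.single i 1 : ι → F) j) = 0 := fun j => by
    by_cases hj : j = i
    · subst hj
      simp
    · simp [hj]
  have hsum : ∑ j, (Pi.single i 1 : ι → F) j * w j = 0 := by
    simp [Pi.single_apply, hwi]
  simpa using hw _ hc hsum i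

theorem comp (hw : LinearIndependentOverConstants D w) {κ : Type*} [Fintype κ] {e : κ → ι}
    (he : Function.Injective e) : LinearIndependentOverConstants D (w ∘ e) := by
  intro a ha hsum i
  have hext : ∀ s, s ∉ univ.map ⟨e, he⟩ → Function.extend e a 0 s = 0 := fun s hs =>
    Function.extend_apply' _ _ _ (by simpa using hs)
  have hc : ∀ s, D (Function.extend e a 0 s) = 0 := fun s => by
    by_cases hs : ∃ j, e j = s
    · obtain ⟨j, rfl⟩ := hs
      rw [he.extend_apply]
      exact ha j
    · rw [Function.extend_apply' _ _ _ hs, Pi.zero_apply, map_zero]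
  have hsum' : ∑ s, Function.extend e a 0 s * w s = 0 := by
    rw [← sum_subset (subset_univ _) fun s _ hs => by rw [hext s hs, zero_mul], sum_map]
    simpa [he.extend_apply] using hsum
  simpa [he.extend_apply] using hw _ hc hsum' (e i)

end LinearIndependentOverConstants

/-- Reduction of order: writing `y = y₀ u`, the equation for `u` has no term of order zero, so
`u ↦ D u` turns the solutions `yᵢ / y₀` into solutions of an equation of order one less. -/
theorem not_linearIndependentOverConstants_of_sum_eq_zero (d : ℕ) (c : ℕ → F) (hc : c d ≠ 0)
    (y : Fin (d + 1) → F) (hy : ∀ i, ∑ m ∈ range (d + 1), c m * D^[m] (y i) = 0) :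
    ¬ LinearIndependentOverConstants D y := by
  induction d generalizing c with
  | zero =>
    intro hind
    exact hind.ne_zero 0 (by simpa [hc] using hy 0)
  | succ d ih =>
    intro hind
    have hz : y 0 ≠ 0 := hind.ne_zero 0
    set b : ℕ → F := fun m => ∑ i ∈ range (d + 1 + 1), c i * i.choose m * D^[i - m] (y 0)
    have hconj : ∀ u, ∑ i ∈ range (d + 1 + 1), c i * D^[i] (y 0 * u) =
        ∑ m ∈ range (d + 1 + 1), b m * D^[m] u :=
      D.sum_mul_iterate_mul c (d + 1 + 1) (y 0)
    have hb0 : b 0 = 0 := by simpa [b] using hy 0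
    have hbtop : b (d + 1) = c (d + 1) * y 0 := by
      simp only [b]
      rw [sum_eq_single (d + 1) (fun i hi hne => by
        rw [Nat.choose_eq_zero_of_lt (by simp at hi; omega)]; simp) (by simp)]
      simp
    set u : Fin (d + 1) → F := fun i => y i.succ / y 0
    have hyu : ∀ i, y i.succ = y 0 * u i := fun i => (mul_div_cancel₀ _ hz).symm
    have hu : ∀ i, ∑ m ∈ range (d + 1), b (m + 1) * D^[m] (D (u i)) = 0 := fun i => by
      have := hconj (u i)
      rw [← hyu, hy i.succ, sum_range_succ', hb0, zero_mul, add_zero] at this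
      simpa only [← Function.iterate_succ_apply] using this.symm
    refine ih (fun m => b (m + 1)) (by simpa [hbtop] using mul_ne_zero hc hz) _ hu ?_
    intro a ha hsum i
    obtain ⟨s, hs_def⟩ : ∃ s, s = ∑ j, a j * u j := ⟨_, rfl⟩
    have hs : D s = 0 := by simp [hs_def, leibniz, ha, hsum]
    have hrel : ∑ j, (Fin.cons (-s) a : Fin (d + 1 + 1) → F) j * y j = 0 := by
      have : ∑ j, a j * y j.succ = y 0 * s := by
        rw [hs_def, mul_sum]
        exact sum_congr rfl fun j _ => by rw [hyu]; ring
      rw [Fin.sum_univ_succ]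
      simp only [Fin.cons_zero, Fin.cons_succ, this]
      ring
    simpa using hind (Fin.cons (-s) a) (Fin.cases (by simp [hs]) ha) hrel i.succ

end Field

end Derivation

theorem error_locator_roots_general (Fq : Type*) [Field Fq]
    (p : ℕ)
    (δ : RatFunc Fq → RatFunc Fq)
    (hadd : ∀ a b : RatFunc Fq, δ (a + b) = δ a + δ b)
    (hmul : ∀ a b : RatFunc Fq, δ (a * b) = a * δ b + δ a * b)
    (α : RatFunc Fq)
    (hli : ∀ a : Fin p → RatFunc Fq, (∀ i, δ (a i) = 0) →
      ∑ i, a i * δ^[(i : ℕ)] α = 0 → ∀ i, a i = 0)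
    (v : ℕ) (k : Fin v → Fin p) (hk : Function.Injective k)
    -- `lam` is the error locator polynomial: the monic least left common multiple
    -- of the `x − L(δ^{k_j}(α))`
    (lam : ℕ →₀ RatFunc Fq)
    (hdvd : ∀ j : Fin v,
      RDvd δ (Finsupp.single 1 1
        - Finsupp.single 0 (δ (δ^[(k j : ℕ)] α) / δ^[(k j : ℕ)] α)) lam)
    (hgen : ∀ h : ℕ →₀ RatFunc Fq,
      (∀ j : Fin v, RDvd δ (Finsupp.single 1 1
        - Finsupp.single 0 (δ (δ^[(k j : ℕ)] α) / δ^[(k j : ℕ)] α)) h) →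
      RDvd δ lam h) :
    ∀ t : Fin p,
      (∃ j, k j = t) ↔
        ∑ i ∈ lam.support,
          lam i * Nrec δ (δ (δ^[(t : ℕ)] α) / δ^[(t : ℕ)] α) i = 0 := by
  obtain ⟨D, rfl⟩ := Derivation.exists_coe_eq δ hadd hmul
  have hind : Derivation.LinearIndependentOverConstants D fun i : Fin p => D^[i] α := hli
  have hne : ∀ t : Fin p, D^[t] α ≠ 0 := hind.ne_zero
  intro t
  rw [D.sum_Nrec_logDeriv_eq_zero_iff (hne t)]
  constructor
  · rintro ⟨j, rfl⟩
    exact (hdvd j).applyOp_eq_zero (by simp [div_mul_cancel₀ _ (hne _)])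
  intro hroot
  by_contra ht
  obtain ⟨h, d, hdv, hh, hann⟩ := D.exists_isMonicOfDeg_applyOp_eq_zero v fun j => D^[k j] α
  have hlam : RDvd D lam h :=
    hgen h fun j => D.rdvd_X_sub_logDeriv_of_applyOp_eq_zero (hne _) (hann j)
  have hsol : ∀ i, D.applyOp h (D^[((Fin.cons t k : Fin (v + 1) → Fin p) i : ℕ)] α) = 0 :=
    Fin.cases (by simpa using hlam.applyOp_eq_zero hroot) fun j => by simpa using hann j
  have hinj : Function.Injective
      ((Fin.cons t k : Fin (v + 1) → Fin p) ∘ Fin.castLE (by omega : d + 1 ≤ v + 1)) :=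
    (Fin.cons_injective_iff.2 ⟨ht, hk⟩).comp (Fin.castLE_injective _)
  refine D.not_linearIndependentOverConstants_of_sum_eq_zero d h (by simp [hh.1]) _
    (fun i => ?_) (hind.comp hinj)
  rw [← D.applyOp_eq_sum_range fun n hn => hh.2 n (by omega)]
  exact hsol _

/-- A position `t` is an error position (`t ∈ {k_1, …, k_v}`) if and only if
`L(δ^t(α))` is a right root of the error locator polynomial
`λ = [x − L(δ^{k_1}(α)), …, x − L(δ^{k_v}(α))]_ℓ`, i.e. the right evaluation
`λ[L(δ^t(α))] = ∑_i λ_i N_i(L(δ^t(α)))` vanishes. -/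
theorem error_locator_roots (Fq : Type*) [Field Fq] [Fintype Fq]
    (p : ℕ) [Fact p.Prime] [CharP Fq p]
    (δ : RatFunc Fq → RatFunc Fq)
    (hadd : ∀ a b : RatFunc Fq, δ (a + b) = δ a + δ b)
    (hmul : ∀ a b : RatFunc Fq, δ (a * b) = a * δ b + δ a * b)
    (hδ : δ ≠ 0)
    (α : RatFunc Fq)
    (hli : ∀ a : Fin p → RatFunc Fq, (∀ i, δ (a i) = 0) →
      ∑ i, a i * δ^[(i : ℕ)] α = 0 → ∀ i, a i = 0)
    (hspan : ∀ f : RatFunc Fq, ∃ a : Fin p → RatFunc Fq,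
      (∀ i, δ (a i) = 0) ∧ f = ∑ i, a i * δ^[(i : ℕ)] α)
    (v : ℕ) (hv : v ≤ p - 1) (k : Fin v → Fin p) (hk : Function.Injective k)
    -- `lam` is the error locator polynomial: the monic least left common multiple
    -- of the `x − L(δ^{k_j}(α))`
    (lam : ℕ →₀ RatFunc Fq)
    (hmonic : ∃ dl : ℕ, IsMonicOfDeg lam dl)
    (hdvd : ∀ j : Fin v,
      RDvd δ (Finsupp.single 1 1
        - Finsupp.single 0 (δ (δ^[(k j : ℕ)] α) / δ^[(k j : ℕ)] α)) lam)
    (hgen : ∀ h : ℕ →₀ RatFunc Fq,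
      (∀ j : Fin v, RDvd δ (Finsupp.single 1 1
        - Finsupp.single 0 (δ (δ^[(k j : ℕ)] α) / δ^[(k j : ℕ)] α)) h) →
      RDvd δ lam h) :
    ∀ t : Fin p,
      (∃ j, k j = t) ↔
        ∑ i ∈ lam.support,
          lam i * Nrec δ (δ (δ^[(t : ℕ)] α) / δ^[(t : ℕ)] α) i = 0 :=
  error_locator_roots_general Fq p δ hadd hmul α hli v k hk lam hdvd hgen
end

section
/- In R = F_q(z)[x;δ] with α a cyclic vector for the nonzero derivation δ, let g_T = [{x − L(δ^j(α))}_{j∈T}]_ℓ for nonempty T ⊆ {0,…,p−1}. Then for all T_1, T_2: [g_{T_1}, g_{T_2}]_ℓ = g_{T_1 ∪ T_2} and (g_{T_1}, g_{T_2})_r = g_{T_1 ∩ T_2}; in particular the greatest common right divisor of two fully α-decomposable polynomials is fully α-decomposable. -/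
open scoped BigOperators

/-- `g` is the fully `α`-decomposable polynomial `g_T`: the monic least left common
multiple of `{x − L(δ^j(α))}_{j ∈ T}` in `F_q(z)[x;δ]`. -/
noncomputable def IsGT {Fq : Type*} [Field Fq] {p : ℕ} (δ : RatFunc Fq → RatFunc Fq)
    (α : RatFunc Fq) (T : Finset (Fin p)) (g : ℕ →₀ RatFunc Fq) : Prop :=
  (∃ d : ℕ, IsMonicOfDeg g d) ∧
  (∀ j ∈ T, RDvd δ (Finsupp.single 1 1
      - Finsupp.single 0 (δ (δ^[(j : ℕ)] α) / δ^[(j : ℕ)] α)) g) ∧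
  (∀ h : ℕ →₀ RatFunc Fq,
    (∀ j ∈ T, RDvd δ (Finsupp.single 1 1
        - Finsupp.single 0 (δ (δ^[(j : ℕ)] α) / δ^[(j : ℕ)] α)) h) →
    RDvd δ g h)

/-!
Let `K[x; δ]` act on `K` with `x` acting as `δ`. The solutions in `K` of `f` form a vector
space over the constants `C` of dimension at most `deg f`, because each nonzero solution `a`
splits off the right factor `x − δa/a`. Since `δʲα` solves `x − L(δʲα)`, the space of
solutions of `g_T` contains the span of `{δʲα : j ∈ T}`. An annihilator of these elements of
degree at most `#T`, built one linear factor at a time, gives `deg g_T ≤ #T`. As the `δʲα` form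
a `C`-basis of `K`, the solutions of `g_T` are exactly their span and `deg g_T = #T`.

The lclm statement follows formally from the definition. For the gcrd, let `h` be a common
right divisor of `g_{T₁}` and `g_{T₂}`. Counting dimensions in `g_{T₁} = q h` shows that the
solutions of `h` have dimension `deg h`, and they lie in the span over `T₁ ∩ T₂`, which is the
solution space of `g_{T₁ ∩ T₂}`. Dividing `g_{T₁ ∩ T₂}` by `h` leaves a remainder that has all
of these solutions while having degree `< deg h`, so the remainder is zero.
-/

open Finsupp Module

theorem LinearMap.finrank_ker_comp_le {k V W U : Type*} [Field k] [AddCommGroup V]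
    [Module k V] [AddCommGroup W] [Module k W] [AddCommGroup U] [Module k U]
    [FiniteDimensional k V] [FiniteDimensional k W] (f : W →ₗ[k] U) (g : V →ₗ[k] W) :
    finrank k (ker (f ∘ₗ g)) ≤ finrank k (ker f) + finrank k (ker g) := by
  have hrank := LinearMap.finrank_range_add_finrank_ker (g.domRestrict (ker (f ∘ₗ g)))
  rw [range_domRestrict, ker_domRestrict] at hrank
  have himage : finrank k ((ker (f ∘ₗ g)).map g) ≤ finrank k (ker f) :=
    Submodule.finrank_mono fun _ ⟨x, hx, hgx⟩ => hgx ▸ hx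
  have hkernel : finrank k ((ker g).comap (ker (f ∘ₗ g)).subtype) ≤ finrank k (ker g) := by
    rw [← Submodule.finrank_map_subtype_eq]
    exact Submodule.finrank_mono (Submodule.map_comap_le _ _)
  omega

theorem Module.Basis.finrank_span_image_finset {ι R M : Type*} [DivisionRing R]
    [AddCommGroup M] [Module R M] (b : Basis ι R M) (s : Finset ι) :
    finrank R (Submodule.span R (b '' s)) = s.card := by
  classical
  rw [← Finset.coe_image, finrank_span_finset_eq_card,
    Finset.card_image_of_injective _ b.injective]
  rw [Finset.coe_image]
  exact (b.linearIndependent.linearIndepOn _).id_image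

theorem Module.Basis.span_image_inter {ι R M : Type*} [Semiring R] [AddCommMonoid M]
    [Module R M] (b : Basis ι R M) (s t : Set ι) :
    Submodule.span R (b '' (s ∩ t)) = Submodule.span R (b '' s) ⊓ Submodule.span R (b '' t) := by
  ext x
  simp only [Submodule.mem_inf, b.mem_span_image, Set.subset_inter_iff]

namespace DiffOp

section OperatorRing

variable {K : Type*} [Field K] (d : Derivation ℤ K K)

noncomputable def shift : Module.End ℤ (ℕ →₀ K) := lmapDomain K ℤ Nat.succ

noncomputable def derivCoeffs : Module.End ℤ (ℕ →₀ K) := mapRange.linearMap (d : K →ₗ[ℤ] K)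

/-- Left multiplication by `x` in `K[x; d]`: `x · c xʲ = c xʲ⁺¹ + d c xʲ`. -/
noncomputable def mulX : Module.End ℤ (ℕ →₀ K) := shift + derivCoeffs d

lemma shift_single (j : ℕ) (b : K) : shift (single j b) = single (j + 1) b := by
  simp [shift]

lemma derivCoeffs_single (j : ℕ) (b : K) : derivCoeffs d (single j b) = single j (d b) := by
  simp [derivCoeffs]

lemma mulX_single (j : ℕ) (b : K) :
    mulX d (single j b) = single (j + 1) b + single j (d b) := by
  simp only [mulX, LinearMap.add_apply, shift_single, derivCoeffs_single]

lemma mulX_smul (c : K) (u : ℕ →₀ K) : mulX d (c • u) = c • mulX d u + d c • u := by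
  induction u using Finsupp.induction_linear with
  | zero => simp
  | add u v hu hv => simp only [smul_add, map_add, hu, hv]; abel
  | single j b =>
    simp only [smul_single, smul_eq_mul, mulX_single, Derivation.leibniz, smul_add,
      single_add, mul_comm b]
    abel

lemma commute_shift_derivCoeffs : Commute shift (derivCoeffs d) :=
  Finsupp.lhom_ext fun j b => by
    simp only [Module.End.mul_apply, shift_single, derivCoeffs_single]

lemma shift_pow_single (k j : ℕ) (b : K) : (shift ^ k) (single j b) = single (j + k) b := by
  induction k with
  | zero => rfl
  | succ k ih => rw [pow_succ', Module.End.mul_apply, ih, shift_single, add_assoc]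

lemma derivCoeffs_pow_single (k j : ℕ) (b : K) :
    (derivCoeffs d ^ k) (single j b) = single j (d^[k] b) := by
  induction k with
  | zero => rfl
  | succ k ih =>
    rw [pow_succ', Module.End.mul_apply, ih, derivCoeffs_single, Function.iterate_succ_apply']

lemma mulX_pow_single (i j : ℕ) (b : K) :
    (mulX d ^ i) (single j b)
      = ∑ k ∈ Finset.range (i + 1), single (j + k) ((i.choose k : K) * d^[i - k] b) := by
  rw [mulX, (commute_shift_derivCoeffs d).add_pow, LinearMap.sum_apply]
  refine Finset.sum_congr rfl fun k _ => ?_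
  rw [Module.End.mul_apply, Module.End.mul_apply, Module.End.natCast_apply, map_nsmul,
    map_nsmul, derivCoeffs_pow_single, shift_pow_single, smul_single, nsmul_eq_mul]

lemma mulX_pow_single_apply (i j n : ℕ) (b : K) :
    (mulX d ^ i) (single j b) n
      = if j ≤ n then (i.choose (n - j) : K) * d^[i - (n - j)] b else 0 := by
  rw [mulX_pow_single, Finset.sum_apply']
  simp only [single_apply]
  split_ifs with hjn
  · rw [Finset.sum_eq_single (n - j), if_pos (by omega)]
    · exact fun k _ hk => if_neg (by omega)
    · intro hk
      rw [Finset.mem_range, not_lt] at hk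
      rw [if_pos (by omega), Nat.choose_eq_zero_of_lt (by omega), Nat.cast_zero, zero_mul]
  · exact Finset.sum_eq_zero fun k _ => if_neg (by omega)

lemma mulX_pow_apply (i : ℕ) (g : ℕ →₀ K) (n : ℕ) :
    (mulX d ^ i) g n = ∑ j ∈ g.support,
      if j ≤ n then (i.choose (n - j) : K) * d^[i - (n - j)] (g j) else 0 := by
  conv_lhs => rw [← g.sum_single]
  rw [map_finsuppSum, Finsupp.sum, Finsupp.finsetSum_apply]
  exact Finset.sum_congr rfl fun j _ => mulX_pow_single_apply d i j n (g j)

variable {M : Type*} [AddCommGroup M] [Module K M]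

/-- The action of `K[x; d]` on a `K`-module in which `x` acts by `D`. -/
noncomputable def act (D : Module.End ℤ M) : (ℕ →₀ K) →ₗ[K] Module.End ℤ M :=
  linearCombination K (D ^ ·)

lemma act_apply (D : Module.End ℤ M) (f : ℕ →₀ K) (m : M) :
    act D f m = f.sum fun i c => c • (D ^ i) m := by
  simp [act, linearCombination_apply, LinearMap.finsupp_sum_apply]

lemma act_single_apply (D : Module.End ℤ M) (i : ℕ) (c : K) (m : M) :
    act D (single i c) m = c • (D ^ i) m := by
  simp [act]

section Twisted

variable {d} {D : Module.End ℤ M} (hD : ∀ (c : K) (m : M), D (c • m) = c • D m + d c • m)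
include hD

lemma act_mulX_apply (g : ℕ →₀ K) (m : M) : act D (mulX d g) m = D (act D g m) := by
  induction g using Finsupp.induction_linear with
  | zero => simp
  | add u v hu hv => simp only [map_add, LinearMap.add_apply, hu, hv]
  | single j b =>
    rw [mulX_single, map_add, LinearMap.add_apply, act_single_apply, act_single_apply,
      act_single_apply, hD, pow_succ', Module.End.mul_apply]

lemma act_mulX_pow_apply (i : ℕ) (g : ℕ →₀ K) (m : M) :
    act D ((mulX d ^ i) g) m = (D ^ i) (act D g m) := by
  induction i with
  | zero => rfl
  | succ i ih =>
    rw [pow_succ', Module.End.mul_apply, act_mulX_apply hD, ih, pow_succ',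
      Module.End.mul_apply]

lemma act_act_apply (f g : ℕ →₀ K) (m : M) :
    act D (act (mulX d) f g) m = act D f (act D g m) := by
  induction f using Finsupp.induction_linear with
  | zero => simp
  | add u v hu hv => simp only [map_add, LinearMap.add_apply, hu, hv]
  | single i c =>
    rw [act_single_apply, act_single_apply, map_smul, LinearMap.smul_apply,
      act_mulX_pow_apply hD]

lemma act_apply_smul_of_deriv_eq_zero {c : K} (hc : d c = 0) (f : ℕ →₀ K) (m : M) :
    act D f (c • m) = c • act D f m := by
  have hpow : ∀ i (m : M), (D ^ i) (c • m) = c • (D ^ i) m := by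
    intro i
    induction i with
    | zero => exact fun _ => rfl
    | succ i ih =>
      intro m
      rw [pow_succ', Module.End.mul_apply, ih, hD, hc, zero_smul, add_zero,
        Module.End.mul_apply]
  simp only [act_apply, Finsupp.smul_sum, hpow, smul_comm c]

end Twisted

/-- Multiplication in `K[x; d]`, as the action of `K[x; d]` on itself. -/
noncomputable def dmul (f g : ℕ →₀ K) : ℕ →₀ K := act (mulX d) f g

lemma dmul_assoc (f g h : ℕ →₀ K) : dmul d (dmul d f g) h = dmul d f (dmul d g h) :=
  act_act_apply (mulX_smul d) f g h

lemma dmul_add_left (f f' g : ℕ →₀ K) : dmul d (f + f') g = dmul d f g + dmul d f' g := by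
  simp [dmul]

lemma dmul_zero_right (f : ℕ →₀ K) : dmul d f 0 = 0 := map_zero _

lemma skewMul_eq_dmul (f g : ℕ →₀ K) (n : ℕ) : skewMul d f g n = dmul d f g n := by
  rw [skewMul, dmul, act_apply, Finsupp.sum, Finsupp.finsetSum_apply]
  refine Finset.sum_congr rfl fun i _ => ?_
  rw [Finsupp.smul_apply, smul_eq_mul, mulX_pow_apply, Finset.mul_sum]
  refine Finset.sum_congr rfl fun j _ => ?_
  rw [mul_ite, mul_zero, mul_assoc]

lemma rdvd_iff_exists_dmul (f g : ℕ →₀ K) : RDvd d f g ↔ ∃ q, g = dmul d q f := by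
  simp only [RDvd, skewMul_eq_dmul, Finsupp.ext_iff]

variable {d} in
lemma _root_.RDvd.trans {f g h : ℕ →₀ K} (hfg : RDvd d f g) (hgh : RDvd d g h) :
    RDvd d f h := by
  rw [rdvd_iff_exists_dmul] at *
  obtain ⟨q, rfl⟩ := hfg
  obtain ⟨r, rfl⟩ := hgh
  exact ⟨dmul d r q, (dmul_assoc d r q f).symm⟩

end OperatorRing

section Degree

variable {K : Type*} [Field K]

def HasDegree (f : ℕ →₀ K) (m : ℕ) : Prop :=
  f m ≠ 0 ∧ ∀ n, m < n → f n = 0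

lemma _root_.IsMonicOfDeg.hasDegree {f : ℕ →₀ K} {m : ℕ} (hf : IsMonicOfDeg f m) :
    HasDegree f m :=
  ⟨hf.1 ▸ one_ne_zero, hf.2⟩

lemma HasDegree.ne_zero {f : ℕ →₀ K} {m : ℕ} (hf : HasDegree f m) : f ≠ 0 :=
  fun h => hf.1 (by simp [h])

lemma HasDegree.unique {f : ℕ →₀ K} {m n : ℕ} (hm : HasDegree f m) (hn : HasDegree f n) :
    m = n := by
  by_contra hmn
  rcases Nat.lt_or_gt_of_ne hmn with h | h
  · exact hn.1 (hm.2 n h)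
  · exact hm.1 (hn.2 m h)

lemma exists_hasDegree {f : ℕ →₀ K} (hf : f ≠ 0) : ∃ m, HasDegree f m := by
  have hne : f.support.Nonempty := Finsupp.support_nonempty_iff.mpr hf
  refine ⟨f.support.max' hne, mem_support_iff.mp (f.support.max'_mem hne), fun n hn => ?_⟩
  by_contra hfn
  exact (f.support.le_max' n (mem_support_iff.mpr hfn)).not_gt hn

variable (d : Derivation ℤ K K)

lemma mulX_pow_apply_of_le {g : ℕ →₀ K} {b : ℕ} (hg : ∀ k, b < k → g k = 0) {i n : ℕ}
    (hn : b + i ≤ n) : (mulX d ^ i) g n = if n = b + i then g b else 0 := by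
  have hsupp : ∀ j ∈ g.support, j ≤ b :=
    fun j hj => not_lt.1 fun hbj => mem_support_iff.1 hj (hg j hbj)
  rw [mulX_pow_apply]
  split_ifs with hnb
  · subst hnb
    rw [Finset.sum_eq_single b]
    · simp
    · intro j hj hjb
      rw [Nat.choose_eq_zero_of_lt (by have := hsupp j hj; omega)]
      simp
    · intro hb
      simp [notMem_support_iff.1 hb]
  · refine Finset.sum_eq_zero fun j hj => ?_
    rw [Nat.choose_eq_zero_of_lt (by have := hsupp j hj; omega)]
    simp

lemma dmul_apply_of_le {f g : ℕ →₀ K} {a b : ℕ} (hf : ∀ k, a < k → f k = 0)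
    (hg : ∀ k, b < k → g k = 0) {n : ℕ} (hn : a + b ≤ n) :
    dmul d f g n = if n = a + b then f a * g b else 0 := by
  have hsupp : ∀ i ∈ f.support, i ≤ a :=
    fun i hi => not_lt.1 fun hai => mem_support_iff.1 hi (hf i hai)
  rw [dmul, act_apply, Finsupp.sum, Finsupp.finsetSum_apply]
  simp only [Finsupp.smul_apply, smul_eq_mul]
  rw [Finset.sum_congr rfl fun i hi => by
    rw [mulX_pow_apply_of_le d hg (by have := hsupp i hi; omega)]]
  split_ifs with hab
  · rw [Finset.sum_eq_single a, if_pos (by omega)]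
    · exact fun i _ hia => by rw [if_neg (by omega), mul_zero]
    · exact fun ha => by rw [notMem_support_iff.1 ha, zero_mul]
  · exact Finset.sum_eq_zero fun i hi => by
      rw [if_neg (by have := hsupp i hi; omega), mul_zero]

lemma hasDegree_dmul {f g : ℕ →₀ K} {a b : ℕ} (hf : HasDegree f a) (hg : HasDegree g b) :
    HasDegree (dmul d f g) (a + b) := by
  refine ⟨?_, fun n hn => ?_⟩
  · rw [dmul_apply_of_le d hf.2 hg.2 le_rfl, if_pos rfl]
    exact mul_ne_zero hf.1 hg.1
  · rw [dmul_apply_of_le d hf.2 hg.2 hn.le, if_neg hn.ne']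

lemma HasDegree.of_dmul {q f : ℕ →₀ K} {m n : ℕ} (hqf : HasDegree (dmul d q f) n)
    (hf : HasDegree f m) : m ≤ n ∧ HasDegree q (n - m) := by
  obtain ⟨k, hk⟩ := exists_hasDegree fun hq : q = 0 => hqf.ne_zero (by simp [hq, dmul])
  obtain rfl := (hasDegree_dmul d hk hf).unique hqf
  exact ⟨by omega, by simpa using hk⟩

lemma exists_eq_dmul_add {h : ℕ →₀ K} {m : ℕ} (hh : HasDegree h m) (f : ℕ →₀ K) :
    ∃ q r, f = dmul d q h + r ∧ ∀ k, m ≤ k → r k = 0 := by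
  suffices key : ∀ N (f : ℕ →₀ K), (∀ k, N ≤ k → f k = 0) →
      ∃ q r, f = dmul d q h + r ∧ ∀ k, m ≤ k → r k = 0 by
    obtain ⟨N, hN⟩ := f.support.exists_nat_subset_range
    exact key N f fun k hk => notMem_support_iff.1 fun hf => by
      have := Finset.mem_range.1 (hN hf); omega
  intro N
  induction N with
  | zero => exact fun f hf => ⟨0, f, by simp [dmul], fun k _ => hf k k.zero_le⟩
  | succ N ih =>
    intro f hf
    by_cases hNm : N < m
    · exact ⟨0, f, by simp [dmul], fun k hk => hf k (by omega)⟩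
    set c := f N / h m
    have hs : ∀ k, N - m < k → single (N - m) c k = 0 := fun k hk => single_eq_of_ne (by omega)
    have hlead : ∀ k, N ≤ k → (f - dmul d (single (N - m) c) h) k = 0 := by
      intro k hk
      rw [Finsupp.sub_apply, dmul_apply_of_le d hs hh.2 (by omega)]
      rcases hk.eq_or_lt with rfl | hlt
      · rw [if_pos (by omega), single_eq_same, div_mul_cancel₀ _ hh.1, sub_self]
      · rw [if_neg (by omega), hf k hlt, sub_zero]
    obtain ⟨q, r, hfqr, hr⟩ := ih _ hlead
    refine ⟨q + single (N - m) c, r, ?_, hr⟩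
    rw [dmul_add_left, add_right_comm, ← hfqr, sub_add_cancel]

end Degree

section Solutions

variable {K : Type*} [Field K] (d : Derivation ℤ K K)

def constants : Subfield K where
  carrier := {a | d a = 0}
  zero_mem' := d.map_zero
  one_mem' := d.map_one_eq_zero
  add_mem' {a b} ha hb := by simp_all
  neg_mem' {a} ha := by simp_all
  mul_mem' {a b} ha hb := by simp_all [Derivation.leibniz]
  inv_mem' a ha := by simp_all [Derivation.leibniz_inv]

lemma mem_constants {c : K} : c ∈ constants d ↔ d c = 0 := Iff.rfl

lemma leibniz_smul (c a : K) : d (c • a) = c • d a + d c • a := by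
  simp only [smul_eq_mul, Derivation.leibniz, mul_comm a]

/-- `f` acting on `K`, with `x` acting as `d`. -/
noncomputable def ev (f : ℕ →₀ K) : K →ₗ[constants d] K where
  toFun := act (d : Module.End ℤ K) f
  map_add' := map_add _
  map_smul' c a := act_apply_smul_of_deriv_eq_zero (leibniz_smul d) c.2 f a

lemma ev_apply (f : ℕ →₀ K) (a : K) : ev d f a = act (d : Module.End ℤ K) f a := rfl

lemma ev_dmul (f g : ℕ →₀ K) : ev d (dmul d f g) = ev d f ∘ₗ ev d g :=
  LinearMap.ext fun a => act_act_apply (leibniz_smul d) f g a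

lemma ev_add (f g : ℕ →₀ K) : ev d (f + g) = ev d f + ev d g :=
  LinearMap.ext fun a => by simp [ev_apply]

lemma ev_sub (f g : ℕ →₀ K) : ev d (f - g) = ev d f - ev d g :=
  LinearMap.ext fun a => by simp [ev_apply]

lemma ev_single (i : ℕ) (c a : K) : ev d (single i c) a = c * d^[i] a := by
  rw [ev_apply, act_single_apply, Module.End.coe_pow, smul_eq_mul]
  rfl

noncomputable def solSpace (f : ℕ →₀ K) : Submodule (constants d) K := LinearMap.ker (ev d f)

lemma solSpace_mono_of_rdvd {f g : ℕ →₀ K} (hfg : RDvd d f g) : solSpace d f ≤ solSpace d g := by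
  obtain ⟨q, rfl⟩ := (rdvd_iff_exists_dmul d f g).1 hfg
  intro x hx
  rw [solSpace, LinearMap.mem_ker, ev_dmul, LinearMap.comp_apply, hx, map_zero]

lemma finrank_solSpace_dmul_le [FiniteDimensional (constants d) K] (q f : ℕ →₀ K) :
    finrank (constants d) (solSpace d (dmul d q f))
      ≤ finrank (constants d) (solSpace d q) + finrank (constants d) (solSpace d f) := by
  rw [solSpace, ev_dmul]
  exact LinearMap.finrank_ker_comp_le _ _

/-- The paper's `x − L(a)`, with `L a = d a / a` the logarithmic derivative. -/
noncomputable def linFactor (a : K) : ℕ →₀ K := single 1 1 - single 0 (d a / a)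

lemma isMonicOfDeg_linFactor (a : K) : IsMonicOfDeg (linFactor d a) 1 :=
  ⟨by simp [linFactor], fun n hn => by
    simp [linFactor, show 1 ≠ n by omega, show 0 ≠ n by omega]⟩

lemma ev_linFactor (a b : K) : ev d (linFactor d a) b = d b - d a / a * b := by
  simp [linFactor, ev_sub, ev_single]

lemma ev_linFactor_self {a : K} (ha : a ≠ 0) : ev d (linFactor d a) a = 0 := by
  rw [ev_linFactor, div_mul_cancel₀ _ ha, sub_self]

lemma solSpace_linFactor_le_span {a : K} (ha : a ≠ 0) :
    solSpace d (linFactor d a) ≤ Submodule.span (constants d) {a} := by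
  intro b hb
  have hdb : d b = d a / a * b := sub_eq_zero.1 ((ev_linFactor d a b).symm.trans hb)
  have hconst : b / a ∈ constants d := by
    rw [mem_constants, Derivation.leibniz_div, hdb, smul_eq_mul, smul_eq_mul]
    field_simp
    ring
  exact Submodule.mem_span_singleton.2 ⟨⟨b / a, hconst⟩, div_mul_cancel₀ b ha⟩

lemma rdvd_linFactor_of_ev_eq_zero {f : ℕ →₀ K} {a : K} (ha : a ≠ 0) (hf : ev d f a = 0) :
    RDvd d (linFactor d a) f := by
  obtain ⟨q, r, rfl, hr⟩ := exists_eq_dmul_add d (isMonicOfDeg_linFactor d a).hasDegree f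
  have hr0 : r = single 0 (r 0) := by
    ext (_ | n)
    · simp
    · simp [hr (n + 1) (by omega)]
  rw [hr0, ev_add, LinearMap.add_apply, ev_dmul, LinearMap.comp_apply, ev_linFactor_self d ha,
    map_zero, zero_add, ev_single, Function.iterate_zero_apply] at hf
  rw [rdvd_iff_exists_dmul]
  exact ⟨q, by rw [hr0, (mul_eq_zero.1 hf).resolve_right ha, single_zero, add_zero]⟩

lemma exists_annihilator (S : Finset K) :
    ∃ h m, HasDegree h m ∧ m ≤ S.card ∧ ∀ a ∈ S, ev d h a = 0 := by
  classical
  induction S using Finset.induction_on with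
  | empty =>
    exact ⟨single 0 1, 0, ⟨by simp, fun n hn => single_eq_of_ne (by omega)⟩, le_rfl, by simp⟩
  | insert a S ha ih =>
    obtain ⟨h, m, hh, hm, hS⟩ := ih
    by_cases hva : ev d h a = 0
    · refine ⟨h, m, hh, hm.trans (Finset.card_le_card (S.subset_insert a)), ?_⟩
      exact Finset.forall_mem_insert a S _ |>.2 ⟨hva, hS⟩
    · refine ⟨dmul d (linFactor d (ev d h a)) h, 1 + m,
        hasDegree_dmul d (isMonicOfDeg_linFactor d _).hasDegree hh,
        by rw [Finset.card_insert_of_notMem ha]; omega, fun b hb => ?_⟩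
      rw [ev_dmul, LinearMap.comp_apply]
      rcases Finset.mem_insert.1 hb with rfl | hb
      · exact ev_linFactor_self d hva
      · rw [hS b hb, map_zero]

variable [FiniteDimensional (constants d) K]

lemma finrank_solSpace_le {f : ℕ →₀ K} {m : ℕ} (hf : HasDegree f m) :
    finrank (constants d) (solSpace d f) ≤ m := by
  induction m using Nat.strong_induction_on generalizing f with
  | _ m ih =>
  by_cases hbot : solSpace d f = ⊥
  · rw [hbot, finrank_bot]
    exact m.zero_le
  obtain ⟨a, ha, ha0⟩ := (Submodule.ne_bot_iff _).1 hbot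
  obtain ⟨q, rfl⟩ := (rdvd_iff_exists_dmul d _ f).1 (rdvd_linFactor_of_ev_eq_zero d ha0 ha)
  obtain ⟨h1m, hq⟩ := hf.of_dmul d (isMonicOfDeg_linFactor d a).hasDegree
  have hlin : finrank (constants d) (solSpace d (linFactor d a)) ≤ 1 :=
    (Submodule.finrank_mono (solSpace_linFactor_le_span d ha0)).trans
      (finrank_span_singleton ha0).le
  have := finrank_solSpace_dmul_le d q (linFactor d a)
  have := ih (m - 1) (by omega) hq
  omega

lemma le_finrank_solSpace_of_rdvd {h g : ℕ →₀ K} {m n : ℕ} (hh : HasDegree h m)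
    (hg : HasDegree g n) (hhg : RDvd d h g)
    (hsol : n ≤ finrank (constants d) (solSpace d g)) :
    m ≤ finrank (constants d) (solSpace d h) := by
  obtain ⟨q, rfl⟩ := (rdvd_iff_exists_dmul d h g).1 hhg
  obtain ⟨hmn, hq⟩ := hg.of_dmul d hh
  have := finrank_solSpace_dmul_le d q h
  have := finrank_solSpace_le d hq
  omega

lemma rdvd_of_solSpace_le {h g : ℕ →₀ K} {m : ℕ} (hh : HasDegree h m)
    (hsol : m ≤ finrank (constants d) (solSpace d h)) (hle : solSpace d h ≤ solSpace d g) :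
    RDvd d h g := by
  obtain ⟨q, r, rfl, hr⟩ := exists_eq_dmul_add d hh g
  suffices r = 0 from (rdvd_iff_exists_dmul d _ _).2 ⟨q, by rw [this, add_zero]⟩
  by_contra hr0
  obtain ⟨k, hk⟩ := exists_hasDegree hr0
  have hkm : k < m := lt_of_not_ge fun hmk => hk.1 (hr k hmk)
  have hsub : solSpace d h ≤ solSpace d r := fun x hx => by
    have hgx : ev d (dmul d q h + r) x = 0 := hle hx
    have hx : ev d h x = 0 := hx
    rwa [ev_add, LinearMap.add_apply, ev_dmul, LinearMap.comp_apply, hx, map_zero,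
      zero_add] at hgx
  have := Submodule.finrank_mono hsub
  have := finrank_solSpace_le d hk
  omega

end Solutions

section CyclicVector

variable {K : Type*} [Field K] (d : Derivation ℤ K K) {p : ℕ} (α : K)
  (hli : ∀ a : Fin p → K, (∀ i, d (a i) = 0) → ∑ i, a i * d^[(i : ℕ)] α = 0 → ∀ i, a i = 0)
  (hspan : ∀ f : K, ∃ a : Fin p → K, (∀ i, d (a i) = 0) ∧ f = ∑ i, a i * d^[(i : ℕ)] α)

noncomputable def cyclicBasis : Basis (Fin p) (constants d) K :=
  Basis.mk (v := fun i : Fin p => d^[i] α)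
    (Fintype.linearIndependent_iff.2 fun c hc i =>
      Subtype.ext (hli (fun i => c i) (fun i => (c i).2) hc i))
    fun f _ => by
      obtain ⟨a, ha, rfl⟩ := hspan f
      refine Submodule.sum_mem _ fun i _ => ?_
      exact Submodule.smul_mem _ (⟨a i, ha i⟩ : constants d)
        (Submodule.subset_span (Set.mem_range_self i))

lemma cyclicBasis_apply (i : Fin p) : cyclicBasis d α hli hspan i = d^[i] α :=
  Basis.mk_apply _ _ _

end CyclicVector

def derivationOfLeibniz {K : Type*} [CommRing K] (δ : K → K)
    (hadd : ∀ a b : K, δ (a + b) = δ a + δ b)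
    (hmul : ∀ a b : K, δ (a * b) = a * δ b + δ a * b) : Derivation ℤ K K :=
  Derivation.mk' (AddMonoidHom.mk' δ hadd).toIntLinearMap fun a b => by
    simp [hmul, mul_comm]

section FullyDecomposable

/- These lemmas take `δ` with its additivity and Leibniz laws rather than a `Derivation`: a
variable of type `Derivation ℤ (RatFunc Fq) (RatFunc Fq)` would carry `RatFunc`'s own
`Algebra ℤ` instance, which is not reducibly equal to the `algebraInt` instance in the general
lemmas above. -/
variable {Fq : Type*} [Field Fq] {δ : RatFunc Fq → RatFunc Fq}
  (hadd : ∀ a b : RatFunc Fq, δ (a + b) = δ a + δ b)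
  (hmul : ∀ a b : RatFunc Fq, δ (a * b) = a * δ b + δ a * b)
  {p : ℕ} {α : RatFunc Fq} {T₁ T₂ : Finset (Fin p)}
include hadd hmul

lemma _root_.IsGT.union_isLclm {g₁ g₂ g₁₂ : ℕ →₀ RatFunc Fq} (hg₁ : IsGT δ α T₁ g₁)
    (hg₂ : IsGT δ α T₂ g₂) (hg₁₂ : IsGT δ α (T₁ ∪ T₂) g₁₂) :
    RDvd δ g₁ g₁₂ ∧ RDvd δ g₂ g₁₂ ∧
      ∀ h : ℕ →₀ RatFunc Fq, RDvd δ g₁ h → RDvd δ g₂ h → RDvd δ g₁₂ h :=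
  ⟨hg₁.2.2 _ fun j hj => hg₁₂.2.1 j (Finset.mem_union_left _ hj),
    hg₂.2.2 _ fun j hj => hg₁₂.2.1 j (Finset.mem_union_right _ hj),
    fun h h₁ h₂ => hg₁₂.2.2 h fun j hj => (Finset.mem_union.1 hj).elim
      (fun hj => RDvd.trans (d := derivationOfLeibniz δ hadd hmul) (hg₁.2.1 j hj) h₁)
      (fun hj => RDvd.trans (d := derivationOfLeibniz δ hadd hmul) (hg₂.2.1 j hj) h₂)⟩

variable (hli : ∀ a : Fin p → RatFunc Fq, (∀ i, δ (a i) = 0) →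
    ∑ i, a i * δ^[(i : ℕ)] α = 0 → ∀ i, a i = 0)
  (hspan : ∀ f : RatFunc Fq, ∃ a : Fin p → RatFunc Fq,
    (∀ i, δ (a i) = 0) ∧ f = ∑ i, a i * δ^[(i : ℕ)] α)
include hli hspan

lemma _root_.IsGT.isMonicOfDeg_card_and_solSpace_eq {T : Finset (Fin p)}
    {g : ℕ →₀ RatFunc Fq} (hg : IsGT δ α T g) :
    IsMonicOfDeg g T.card ∧
      solSpace (derivationOfLeibniz δ hadd hmul) g = Submodule.span _
        (cyclicBasis (derivationOfLeibniz δ hadd hmul) α hli hspan '' T) := by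
  classical
  set d := derivationOfLeibniz δ hadd hmul
  set b := cyclicBasis d α hli hspan
  have := b.finiteDimensional_of_finite
  have hbj : ∀ j, b j = δ^[(j : ℕ)] α := cyclicBasis_apply d α hli hspan
  have hb : ∀ j : Fin p, δ^[(j : ℕ)] α ≠ 0 := fun j => hbj j ▸ b.ne_zero j
  obtain ⟨⟨n, hmon⟩, hdvd, huniv⟩ := hg
  have hspan_le : Submodule.span (constants d) (b '' T) ≤ solSpace d g :=
    Submodule.span_le.2 <| by
      rintro _ ⟨j, hj, rfl⟩
      rw [hbj]
      exact solSpace_mono_of_rdvd d (hdvd j hj) (ev_linFactor_self d (hb j))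
  obtain ⟨h, m, hh, hm, hker⟩ := exists_annihilator d (T.image fun j : Fin p => δ^[(j : ℕ)] α)
  have hnm : n ≤ m := by
    obtain ⟨q, rfl⟩ := (rdvd_iff_exists_dmul d g h).1 <| huniv h fun j hj =>
      rdvd_linFactor_of_ev_eq_zero d (hb j) (hker _ (Finset.mem_image_of_mem _ hj))
    exact (hh.of_dmul d hmon.hasDegree).1
  have hTn : T.card ≤ finrank (constants d) (solSpace d g) :=
    b.finrank_span_image_finset T ▸ Submodule.finrank_mono hspan_le
  have := finrank_solSpace_le d hmon.hasDegree
  have := T.card_image_le (f := fun j : Fin p => δ^[(j : ℕ)] α)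
  obtain rfl : n = T.card := by omega
  refine ⟨hmon, (Submodule.eq_of_le_of_finrank_le hspan_le ?_).symm⟩
  rw [b.finrank_span_image_finset]
  omega

lemma _root_.IsGT.inter_isGcrd {g₁ g₂ gI : ℕ →₀ RatFunc Fq} (hg₁ : IsGT δ α T₁ g₁)
    (hg₂ : IsGT δ α T₂ g₂) (hgI : IsGT δ α (T₁ ∩ T₂) gI) :
    RDvd δ gI g₁ ∧ RDvd δ gI g₂ ∧
      ∀ h : ℕ →₀ RatFunc Fq, RDvd δ h g₁ → RDvd δ h g₂ → RDvd δ h gI := by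
  refine ⟨hgI.2.2 _ fun j hj => hg₁.2.1 j (Finset.mem_inter.1 hj).1,
    hgI.2.2 _ fun j hj => hg₂.2.1 j (Finset.mem_inter.1 hj).2, fun h h₁ h₂ => ?_⟩
  set d := derivationOfLeibniz δ hadd hmul
  set b := cyclicBasis d α hli hspan
  have := b.finiteDimensional_of_finite
  obtain ⟨hmon₁, hsol₁⟩ := hg₁.isMonicOfDeg_card_and_solSpace_eq hadd hmul hli hspan
  obtain ⟨-, hsol₂⟩ := hg₂.isMonicOfDeg_card_and_solSpace_eq hadd hmul hli hspan
  obtain ⟨-, hsolI⟩ := hgI.isMonicOfDeg_card_and_solSpace_eq hadd hmul hli hspan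
  obtain ⟨m, hm⟩ := exists_hasDegree fun h0 : h = 0 => by
    obtain ⟨q, hq⟩ := (rdvd_iff_exists_dmul d h g₁).1 h₁
    exact hmon₁.hasDegree.ne_zero (by rw [hq, h0, dmul_zero_right])
  refine rdvd_of_solSpace_le d hm
    (le_finrank_solSpace_of_rdvd d hm hmon₁.hasDegree h₁ ?_) ?_
  · rw [hsol₁, b.finrank_span_image_finset]
  · rw [hsolI, Finset.coe_inter, b.span_image_inter, ← hsol₁, ← hsol₂]
    exact le_inf (solSpace_mono_of_rdvd d h₁) (solSpace_mono_of_rdvd d h₂)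

end FullyDecomposable

end DiffOp

theorem gT_lclm_gcrd_general (Fq : Type*) [Field Fq]
    (p : ℕ)
    (δ : RatFunc Fq → RatFunc Fq)
    (hadd : ∀ a b : RatFunc Fq, δ (a + b) = δ a + δ b)
    (hmul : ∀ a b : RatFunc Fq, δ (a * b) = a * δ b + δ a * b)
    (α : RatFunc Fq)
    (hli : ∀ a : Fin p → RatFunc Fq, (∀ i, δ (a i) = 0) →
      ∑ i, a i * δ^[(i : ℕ)] α = 0 → ∀ i, a i = 0)
    (hspan : ∀ f : RatFunc Fq, ∃ a : Fin p → RatFunc Fq,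
      (∀ i, δ (a i) = 0) ∧ f = ∑ i, a i * δ^[(i : ℕ)] α)
    (T₁ T₂ : Finset (Fin p))
    (g₁ g₂ g₁₂ gI : ℕ →₀ RatFunc Fq)
    (hg₁ : IsGT δ α T₁ g₁) (hg₂ : IsGT δ α T₂ g₂)
    (hg₁₂ : IsGT δ α (T₁ ∪ T₂) g₁₂) (hgI : IsGT δ α (T₁ ∩ T₂) gI) :
    -- `g_{T₁ ∪ T₂} = [g_{T₁}, g_{T₂}]_ℓ`
    (RDvd δ g₁ g₁₂ ∧ RDvd δ g₂ g₁₂ ∧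
      ∀ h : ℕ →₀ RatFunc Fq, RDvd δ g₁ h → RDvd δ g₂ h → RDvd δ g₁₂ h) ∧
    -- `g_{T₁ ∩ T₂} = (g_{T₁}, g_{T₂})_r`
    (RDvd δ gI g₁ ∧ RDvd δ gI g₂ ∧
      ∀ h : ℕ →₀ RatFunc Fq, RDvd δ h g₁ → RDvd δ h g₂ → RDvd δ h gI) :=
  ⟨hg₁.union_isLclm hadd hmul hg₂ hg₁₂, hg₁.inter_isGcrd hadd hmul hli hspan hg₂ hgI⟩

/-- For fully `α`-decomposable polynomials `g_T`: `g_{T₁ ∪ T₂}` is the least left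
common multiple of `g_{T₁}` and `g_{T₂}`, and `g_{T₁ ∩ T₂}` is their greatest common
right divisor; in particular, the greatest common right divisor of two fully
`α`-decomposable polynomials is fully `α`-decomposable. -/
theorem gT_lclm_gcrd (Fq : Type*) [Field Fq] [Fintype Fq]
    (p : ℕ) [Fact p.Prime] [CharP Fq p]
    (δ : RatFunc Fq → RatFunc Fq)
    (hadd : ∀ a b : RatFunc Fq, δ (a + b) = δ a + δ b)
    (hmul : ∀ a b : RatFunc Fq, δ (a * b) = a * δ b + δ a * b)
    (hδ : δ ≠ 0)
    (α : RatFunc Fq)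
    (hli : ∀ a : Fin p → RatFunc Fq, (∀ i, δ (a i) = 0) →
      ∑ i, a i * δ^[(i : ℕ)] α = 0 → ∀ i, a i = 0)
    (hspan : ∀ f : RatFunc Fq, ∃ a : Fin p → RatFunc Fq,
      (∀ i, δ (a i) = 0) ∧ f = ∑ i, a i * δ^[(i : ℕ)] α)
    (T₁ T₂ : Finset (Fin p)) (hT₁ : T₁.Nonempty) (hT₂ : T₂.Nonempty)
    (g₁ g₂ g₁₂ gI : ℕ →₀ RatFunc Fq)
    (hg₁ : IsGT δ α T₁ g₁) (hg₂ : IsGT δ α T₂ g₂)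
    (hg₁₂ : IsGT δ α (T₁ ∪ T₂) g₁₂) (hgI : IsGT δ α (T₁ ∩ T₂) gI) :
    -- `g_{T₁ ∪ T₂} = [g_{T₁}, g_{T₂}]_ℓ`
    (RDvd δ g₁ g₁₂ ∧ RDvd δ g₂ g₁₂ ∧
      ∀ h : ℕ →₀ RatFunc Fq, RDvd δ g₁ h → RDvd δ g₂ h → RDvd δ g₁₂ h) ∧
    -- `g_{T₁ ∩ T₂} = (g_{T₁}, g_{T₂})_r`
    (RDvd δ gI g₁ ∧ RDvd δ gI g₂ ∧
      ∀ h : ℕ →₀ RatFunc Fq, RDvd δ h g₁ → RDvd δ h g₂ → RDvd δ h gI) :=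
  gT_lclm_gcrd_general Fq p δ hadd hmul α hli hspan T₁ T₂ g₁ g₂ g₁₂ gI hg₁ hg₂ hg₁₂ hgI
end
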